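/- arXiv:quant-ph/0501090 — 2 statements merged into one kernel-verified Lean document; each statement's English description precedes it below -/
import Mathlib

section
/- For a classical-quantum ensemble state Ω = (1/d²) Σ_{a,b} |a⟩⟨a|^A ⊗ |b⟩⟨b|^B ⊗ ρ_{ab}^C with ρ_{ab} = (X^a Z^b ⊗ 1)ρ(Z^{-b}X^{-a} ⊗ 1), where ρ = (id ⊗ Λ)Φ_d, the relative-entropy identities D(ρ ∥ τ ⊗ Λ(τ)) = I(AB;C)_Ω, D(ρ₀ ∥ τ ⊗ Λ(τ)) = I(A;C)_Ω, and D(ρ₁ ∥ τ ⊗ Λ(τ)) = I(B;C)_Ω hold, where ρ₀ = (M₀ ⊗ id)ρ and ρ₁ = (M₁ ⊗ id)ρ are the dephasings in the computational and Fourier bases. -/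
open scoped Matrix Kronecker BigOperators ComplexOrder
open Matrix

noncomputable section

/-- `x ↦ -x log₂ x` (with value `0` at `0`). -/
def nlog (x : ℝ) : ℝ := -(x * Real.logb 2 x)

/-- A density matrix: positive semidefinite with unit trace. -/
def IsDensity {n : Type*} [Fintype n] (ρ : Matrix n n ℂ) : Prop :=
  ρ.PosSemidef ∧ ρ.trace = 1

/-- Von Neumann entropy (in bits) of a Hermitian matrix, via its eigenvalues. -/
def vnEntropy {n : Type*} [Fintype n] [DecidableEq n] (ρ : Matrix n n ℂ) : ℝ :=
  if h : ρ.IsHermitian then ∑ i, nlog (h.eigenvalues i) else 0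

variable {A B C E : Type*}

/-- Partial trace over the second (right) tensor factor. -/
def ptraceR [Fintype A] [Fintype B] (ρ : Matrix (A × B) (A × B) ℂ) : Matrix A A ℂ :=
  Matrix.of fun a a' => ∑ b, ρ (a, b) (a', b)

/-- Partial trace over the first (left) tensor factor. -/
def ptraceL [Fintype A] [Fintype B] (ρ : Matrix (A × B) (A × B) ℂ) : Matrix B B ℂ :=
  Matrix.of fun b b' => ∑ a, ρ (a, b) (a, b')

/-- Marginal on `A × E` of a state on `(A × B) × E`. -/
def margAE [Fintype A] [Fintype B] [Fintype E]
    (ρ : Matrix ((A × B) × E) ((A × B) × E) ℂ) : Matrix (A × E) (A × E) ℂ :=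
  Matrix.of fun x y => ∑ b, ρ ((x.1, b), x.2) ((y.1, b), y.2)

/-- Marginal on `B × E` of a state on `(A × B) × E`. -/
def margBE [Fintype A] [Fintype B] [Fintype E]
    (ρ : Matrix ((A × B) × E) ((A × B) × E) ℂ) : Matrix (B × E) (B × E) ℂ :=
  Matrix.of fun x y => ∑ a, ρ ((a, x.1), x.2) ((a, y.1), y.2)

/-- Marginals of a tripartite state on `A × B × C` (right associated). -/
def marg1 [Fintype A] [Fintype B] [Fintype C]
    (ρ : Matrix (A × B × C) (A × B × C) ℂ) : Matrix A A ℂ :=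
  Matrix.of fun a a' => ∑ b, ∑ c, ρ (a, b, c) (a', b, c)

def marg2 [Fintype A] [Fintype B] [Fintype C]
    (ρ : Matrix (A × B × C) (A × B × C) ℂ) : Matrix B B ℂ :=
  Matrix.of fun b b' => ∑ a, ∑ c, ρ (a, b, c) (a, b', c)

def marg3 [Fintype A] [Fintype B] [Fintype C]
    (ρ : Matrix (A × B × C) (A × B × C) ℂ) : Matrix C C ℂ :=
  Matrix.of fun c c' => ∑ a, ∑ b, ρ (a, b, c) (a, b, c')

def marg12 [Fintype A] [Fintype B] [Fintype C]
    (ρ : Matrix (A × B × C) (A × B × C) ℂ) : Matrix (A × B) (A × B) ℂ :=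
  Matrix.of fun x y => ∑ c, ρ (x.1, x.2, c) (y.1, y.2, c)

def marg13 [Fintype A] [Fintype B] [Fintype C]
    (ρ : Matrix (A × B × C) (A × B × C) ℂ) : Matrix (A × C) (A × C) ℂ :=
  Matrix.of fun x y => ∑ b, ρ (x.1, b, x.2) (y.1, b, y.2)

def marg23 [Fintype A] [Fintype B] [Fintype C]
    (ρ : Matrix (A × B × C) (A × B × C) ℂ) : Matrix (B × C) (B × C) ℂ :=
  Matrix.of fun x y => ∑ a, ρ (a, x.1, x.2) (a, y.1, y.2)

/-- Quantum mutual information `I(A;B) = S(A) + S(B) - S(AB)` of a bipartite state. -/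
def mutualInfo [Fintype A] [Fintype B] [DecidableEq A] [DecidableEq B]
    (ρ : Matrix (A × B) (A × B) ℂ) : ℝ :=
  vnEntropy (ptraceR ρ) + vnEntropy (ptraceL ρ) - vnEntropy ρ

/-- Conditional mutual information `I(A;B|E) = S(AE) + S(BE) - S(E) - S(ABE)`. -/
def condMI [Fintype A] [Fintype B] [Fintype E] [DecidableEq A] [DecidableEq B] [DecidableEq E]
    (ρ : Matrix ((A × B) × E) ((A × B) × E) ℂ) : ℝ :=
  vnEntropy (margAE ρ) + vnEntropy (margBE ρ) - vnEntropy (ptraceL ρ) - vnEntropy ρ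

/-- An extension of a bipartite state `ρ^{AB}` by a finite-dimensional system `E`. -/
structure Extension {A B : Type*} [Fintype A] [Fintype B]
    (ρ : Matrix (A × B) (A × B) ℂ) where
  e : ℕ
  σ : Matrix ((A × B) × Fin e) ((A × B) × Fin e) ℂ
  density : IsDensity σ
  marg : ptraceR σ = ρ

/-- Entanglement of purification: `E_P(ρ) = inf { S(AE) : extensions ρ^{ABE} }`. -/
def EP [Fintype A] [Fintype B] [DecidableEq A]
    (ρ : Matrix (A × B) (A × B) ℂ) : ℝ :=
  ⨅ ext : Extension ρ, vnEntropy (margAE ext.σ)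

/-- Squashed entanglement: `E_sq(ρ) = inf { ½ I(A;B|E) : extensions ρ^{ABE} }`. -/
def Esq [Fintype A] [Fintype B] [DecidableEq A] [DecidableEq B]
    (ρ : Matrix (A × B) (A × B) ℂ) : ℝ :=
  ⨅ ext : Extension ρ, (1 / 2 : ℝ) * condMI ext.σ

/-- A completely positive trace-preserving map, given on matrices. -/
structure CPTPMap (A B : Type*) [Fintype A] [DecidableEq A] [Fintype B] [DecidableEq B] where
  toFun : Matrix A A ℂ → Matrix B B ℂ
  lin : IsLinearMap ℂ toFun
  tp : ∀ ρ, (toFun ρ).trace = ρ.trace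
  cp : ∀ (n : ℕ) (ρ : Matrix (Fin n × A) (Fin n × A) ℂ), ρ.PosSemidef →
      (Matrix.of fun (x y : Fin n × B) =>
        toFun (Matrix.of fun a a' => ρ (x.1, a) (y.1, a')) x.2 y.2).PosSemidef

/-- The map `id_E ⊗ Λ` applied entrywise on blocks. -/
def idTensor {A B : Type*} [Fintype A] [DecidableEq A] [Fintype B] [DecidableEq B]
    {E : Type*} (Λ : CPTPMap A B) (ρ : Matrix (E × A) (E × A) ℂ) :
    Matrix (E × B) (E × B) ℂ :=
  Matrix.of fun x y => Λ.toFun (Matrix.of fun a a' => ρ (x.1, a) (y.1, a')) x.2 y.2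

/-- The rank-one projector `|v⟩⟨v|`. -/
def ketbra {n : Type*} (v : n → ℂ) : Matrix n n ℂ :=
  Matrix.of fun a b => v a * star (v b)

/-- Computational basis vector. -/
def basisVec {n : Type*} [DecidableEq n] (i : n) : n → ℂ :=
  fun a => if a = i then 1 else 0

/-- The discrete Fourier transform matrix of `ℤ_d`. -/
def fourierMat (d : ℕ) : Matrix (Fin d) (Fin d) ℂ :=
  Matrix.of fun j k =>
    Complex.exp (2 * (Real.pi : ℂ) * Complex.I * ((j : ℕ) : ℂ) * ((k : ℕ) : ℂ) / (d : ℂ)) /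
      ((Real.sqrt d : ℝ) : ℂ)

/-- The maximally mixed state `τ = 𝟙/dim`. -/
def mmix (n : Type*) [Fintype n] [DecidableEq n] : Matrix n n ℂ :=
  ((Fintype.card n : ℂ))⁻¹ • (1 : Matrix n n ℂ)

/-- The maximally entangled state `Φ = |Φ⟩⟨Φ|`, `|Φ⟩ = (1/√dim) Σᵢ |i⟩|i⟩`. -/
def maxEnt (n : Type*) [Fintype n] [DecidableEq n] : Matrix (n × n) (n × n) ℂ :=
  Matrix.of fun x y =>
    if x.1 = x.2 ∧ y.1 = y.2 then ((Fintype.card n : ℂ))⁻¹ else 0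

/-- Holevo information of a uniform ensemble `{(1/|ι|, σ_i)}`. -/
def holevoUnif {ι n : Type*} [Fintype ι] [Fintype n] [DecidableEq n]
    (σ : ι → Matrix n n ℂ) : ℝ :=
  vnEntropy (((Fintype.card ι : ℂ))⁻¹ • ∑ i, σ i) -
    ((Fintype.card ι : ℝ))⁻¹ * ∑ i, vnEntropy (σ i)

/-- Quantum mutual information `I(τ;Λ) = S(τ) + S(Λ(τ)) - S((id ⊗ Λ)Φ)` of a channel
relative to the maximally mixed state. -/
def chanMI {n m : Type*} [Fintype n] [DecidableEq n] [Fintype m] [DecidableEq m]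
    (Λ : CPTPMap n m) : ℝ :=
  Real.logb 2 (Fintype.card n) + vnEntropy (Λ.toFun (mmix n)) -
    vnEntropy (idTensor Λ (maxEnt n))

/-- The swap (flip) operator on `ℂ^d ⊗ ℂ^d`. -/
def swapMat (d : ℕ) : Matrix (Fin d × Fin d) (Fin d × Fin d) ℂ :=
  Matrix.of fun x y => if x.1 = y.2 ∧ x.2 = y.1 then 1 else 0

/-- Projector onto the symmetric subspace. -/
def Psym (d : ℕ) : Matrix (Fin d × Fin d) (Fin d × Fin d) ℂ :=
  ((1 : ℂ) / 2) • ((1 : Matrix (Fin d × Fin d) (Fin d × Fin d) ℂ) + swapMat d)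

/-- Projector onto the antisymmetric subspace. -/
def Panti (d : ℕ) : Matrix (Fin d × Fin d) (Fin d × Fin d) ℂ :=
  ((1 : ℂ) / 2) • ((1 : Matrix (Fin d × Fin d) (Fin d × Fin d) ℂ) - swapMat d)

/-- The discrete Weyl shift operator `X|j⟩ = |j+1⟩`. -/
def weylX (d : ℕ) : Matrix (Fin d) (Fin d) ℂ :=
  Matrix.of fun j k => if (j : ℕ) = ((k : ℕ) + 1) % d then 1 else 0

/-- The discrete Weyl phase operator `Z|j⟩ = e^{2πij/d}|j⟩`. -/
def weylZ (d : ℕ) : Matrix (Fin d) (Fin d) ℂ :=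
  Matrix.diagonal fun j =>
    Complex.exp (2 * (Real.pi : ℂ) * Complex.I * ((j : ℕ) : ℂ) / (d : ℂ))

/-- Matrix logarithm (base 2) of a Hermitian matrix via functional calculus. -/
def matLog {n : Type*} [Fintype n] [DecidableEq n] (ρ : Matrix n n ℂ) : Matrix n n ℂ :=
  if h : ρ.IsHermitian then
    (h.eigenvectorUnitary : Matrix n n ℂ) *
      Matrix.diagonal (fun i => ((Real.logb 2 (h.eigenvalues i) : ℝ) : ℂ)) *
      (star h.eigenvectorUnitary : Matrix n n ℂ)
  else 0

/-- Quantum relative entropy `D(σ‖ω) = Tr σ (log σ - log ω)` (base 2). -/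
def relEnt {n : Type*} [Fintype n] [DecidableEq n] (σ ω : Matrix n n ℂ) : ℝ :=
  ((σ * (matLog σ - matLog ω)).trace).re

/-- The purifying vector of the flower state:
`|Ψ⟩ = (1/√(2d)) Σ_{i,j} |i⟩^A|j⟩^{A'}|i⟩^B|j⟩^{B'} U_j|i⟩^C`,
with systems grouped as `((A × A') × (B × B')) × C`. -/
def flowerKet (d : ℕ) : ((Fin d × Fin 2) × (Fin d × Fin 2)) × Fin d → ℂ :=
  fun u =>
    ((Real.sqrt (2 * d) : ℝ) : ℂ)⁻¹ *
      (if u.1.1.1 = u.1.2.1 ∧ u.1.1.2 = u.1.2.2 then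
        (if u.1.1.2 = 0 then (1 : Matrix (Fin d) (Fin d) ℂ) else fourierMat d) u.2 u.1.1.1
      else 0)

/-- The pure flower state `|Ψ⟩⟨Ψ|` on `AA'BB'C`. -/
def flowerPure (d : ℕ) :
    Matrix (((Fin d × Fin 2) × (Fin d × Fin 2)) × Fin d)
      (((Fin d × Fin 2) × (Fin d × Fin 2)) × Fin d) ℂ :=
  ketbra (flowerKet d)

/-- The flower state `ρ^{AA'BB'} = Tr_C |Ψ⟩⟨Ψ|`. -/
def flowerRho (d : ℕ) :
    Matrix ((Fin d × Fin 2) × (Fin d × Fin 2)) ((Fin d × Fin 2) × (Fin d × Fin 2)) ℂ :=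
  ptraceR (flowerPure d)


section Aux
namespace S15

open Complex

variable {n : Type*} [Fintype n] [DecidableEq n]

/-- Exchange lemma: functional calculus is independent of the chosen diagonalization. -/
lemma conj_diag_congr (f : ℝ → ℝ) {U W : Matrix n n ℂ}
    (hU : Uᴴ * U = 1) (hU2 : U * Uᴴ = 1) (hW : Wᴴ * W = 1) (hW2 : W * Wᴴ = 1)
    {a b : n → ℝ}
    (h : U * diagonal (fun i => ((b i : ℝ) : ℂ)) * Uᴴ
       = W * diagonal (fun i => ((a i : ℝ) : ℂ)) * Wᴴ) :
    U * diagonal (fun i => ((f (b i) : ℝ) : ℂ)) * Uᴴ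
      = W * diagonal (fun i => ((f (a i) : ℝ) : ℂ)) * Wᴴ := by
  set S := Uᴴ * W with hSdef
  have e1 : diagonal (fun i => ((b i : ℝ) : ℂ)) * S
      = Uᴴ * (U * diagonal (fun i => ((b i : ℝ) : ℂ)) * Uᴴ) * W := by
    rw [hSdef]; simp only [← Matrix.mul_assoc, hU, Matrix.one_mul]
  have e2 : S * diagonal (fun i => ((a i : ℝ) : ℂ))
      = Uᴴ * (W * diagonal (fun i => ((a i : ℝ) : ℂ)) * Wᴴ) * W := by
    rw [hSdef]; simp only [← Matrix.mul_assoc]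
    conv_rhs => rw [Matrix.mul_assoc, hW, Matrix.mul_one]
  have hS : diagonal (fun i => ((b i : ℝ) : ℂ)) * S
      = S * diagonal (fun i => ((a i : ℝ) : ℂ)) := by
    rw [e1, e2, h]
  have key : ∀ i j, S i j ≠ 0 → b i = a j := by
    intro i j h0
    have h4 : (diagonal (fun i => ((b i : ℝ) : ℂ)) * S) i j
        = (S * diagonal (fun i => ((a i : ℝ) : ℂ))) i j := by rw [hS]
    simp only [Matrix.diagonal_mul, Matrix.mul_diagonal] at h4
    have h3 : ((b i : ℝ) : ℂ) = ((a j : ℝ) : ℂ) :=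
      mul_right_cancel₀ h0 (h4.trans (mul_comm _ _))
    exact_mod_cast h3
  have hS2 : diagonal (fun i => ((f (b i) : ℝ) : ℂ)) * S
      = S * diagonal (fun i => ((f (a i) : ℝ) : ℂ)) := by
    ext i j
    simp only [Matrix.diagonal_mul, Matrix.mul_diagonal]
    by_cases h0 : S i j = 0
    · simp [h0]
    · rw [key i j h0]; ring
  have hWU : W = U * S := by
    rw [hSdef, ← Matrix.mul_assoc, hU2, Matrix.one_mul]
  have hSS : S * Sᴴ = 1 := by
    rw [hSdef, Matrix.conjTranspose_mul, Matrix.conjTranspose_conjTranspose,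
      Matrix.mul_assoc, ← Matrix.mul_assoc W, hW2, Matrix.one_mul, hU]
  rw [hWU, Matrix.conjTranspose_mul]
  calc U * diagonal (fun i => ((f (b i) : ℝ) : ℂ)) * Uᴴ
      = U * (diagonal (fun i => ((f (b i) : ℝ) : ℂ)) * (S * Sᴴ)) * Uᴴ := by
        rw [hSS, Matrix.mul_one]
    _ = U * S * diagonal (fun i => ((f (a i) : ℝ) : ℂ)) * (Sᴴ * Uᴴ) := by
        rw [← Matrix.mul_assoc _ S Sᴴ, hS2]
        simp only [Matrix.mul_assoc]

lemma isHermitian_conj_diag (W : Matrix n n ℂ) (g : n → ℝ) :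
    (W * diagonal (fun i => ((g i : ℝ) : ℂ)) * Wᴴ).IsHermitian := by
  apply Matrix.isHermitian_mul_mul_conjTranspose
  have hst : (star fun i => ((g i : ℝ) : ℂ)) = fun i => ((g i : ℝ) : ℂ) := by
    funext i
    simp [Complex.star_def, Complex.conj_ofReal]
  rw [Matrix.IsHermitian, Matrix.diagonal_conjTranspose, hst]

/-- matLog of an explicitly diagonalized Hermitian matrix. -/
lemma matLog_conj {W : Matrix n n ℂ} (hW : Wᴴ * W = 1) (hW2 : W * Wᴴ = 1) (g : n → ℝ)
    {A : Matrix n n ℂ} (hAeq : A = W * diagonal (fun i => ((g i : ℝ) : ℂ)) * Wᴴ) :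
    matLog A = W * diagonal (fun i => ((Real.logb 2 (g i) : ℝ) : ℂ)) * Wᴴ := by
  have hA : A.IsHermitian := hAeq ▸ isHermitian_conj_diag W g
  have hUm := hA.eigenvectorUnitary.2
  rw [Matrix.mem_unitaryGroup_iff] at hUm
  rw [Matrix.star_eq_conjTranspose] at hUm
  have hU : (hA.eigenvectorUnitary : Matrix n n ℂ)ᴴ * (hA.eigenvectorUnitary : Matrix n n ℂ) = 1 :=
    mul_eq_one_comm.mp hUm
  have hspec : (hA.eigenvectorUnitary : Matrix n n ℂ) *
      diagonal (fun i => ((hA.eigenvalues i : ℝ) : ℂ)) *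
      (hA.eigenvectorUnitary : Matrix n n ℂ)ᴴ
      = W * diagonal (fun i => ((g i : ℝ) : ℂ)) * Wᴴ := by
    rw [← hAeq]
    conv_rhs => rw [hA.spectral_theorem]
    rfl
  have hfin := conj_diag_congr (Real.logb 2) hU hUm hW hW2 hspec
  rw [matLog, dif_pos hA]
  rw [← hfin]
  rfl

lemma trace_conj_diag {W : Matrix n n ℂ} (hW : Wᴴ * W = 1) (v : n → ℂ) :
    (W * diagonal v * Wᴴ).trace = ∑ i, v i := by
  rw [Matrix.trace_mul_cycle, hW, Matrix.one_mul, Matrix.trace_diagonal]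

lemma conj_mul_conj {W : Matrix n n ℂ} (hW : Wᴴ * W = 1) (v w : n → ℂ) :
    (W * diagonal v * Wᴴ) * (W * diagonal w * Wᴴ)
      = W * diagonal (fun i => v i * w i) * Wᴴ := by
  have : diagonal v * diagonal w = diagonal (fun i => v i * w i) := by
    rw [Matrix.diagonal_mul_diagonal]
  rw [← this]
  simp only [Matrix.mul_assoc]
  rw [← Matrix.mul_assoc Wᴴ W, hW, Matrix.one_mul]

lemma trace_mul_matLog {W : Matrix n n ℂ} (hW : Wᴴ * W = 1) (hW2 : W * Wᴴ = 1) (g : n → ℝ)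
    {A : Matrix n n ℂ} (hAeq : A = W * diagonal (fun i => ((g i : ℝ) : ℂ)) * Wᴴ) :
    ((A * matLog A).trace).re = ∑ k, g k * Real.logb 2 (g k) := by
  rw [matLog_conj hW hW2 g hAeq]
  conv_lhs => rw [hAeq]
  rw [conj_mul_conj hW, trace_conj_diag hW]
  have : (∑ i, (((g i : ℝ) : ℂ) * ((Real.logb 2 (g i) : ℝ) : ℂ)))
      = ((∑ i, g i * Real.logb 2 (g i) : ℝ) : ℂ) := by
    push_cast; ring
  rw [this, Complex.ofReal_re]

omit [DecidableEq n] in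
lemma sum_nlog_eq (g : n → ℝ) : ∑ k, nlog (g k) = -∑ k, g k * Real.logb 2 (g k) := by
  simp [nlog]

lemma vnEntropy_conj {W : Matrix n n ℂ} (hW : Wᴴ * W = 1) (hW2 : W * Wᴴ = 1) (g : n → ℝ)
    {A : Matrix n n ℂ} (hAeq : A = W * diagonal (fun i => ((g i : ℝ) : ℂ)) * Wᴴ) :
    vnEntropy A = ∑ k, nlog (g k) := by
  have hA : A.IsHermitian := hAeq ▸ isHermitian_conj_diag W g
  have hUm := hA.eigenvectorUnitary.2
  rw [Matrix.mem_unitaryGroup_iff, Matrix.star_eq_conjTranspose] at hUm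
  have hU : (hA.eigenvectorUnitary : Matrix n n ℂ)ᴴ * (hA.eigenvectorUnitary : Matrix n n ℂ) = 1 :=
    mul_eq_one_comm.mp hUm
  have hspec : A = (hA.eigenvectorUnitary : Matrix n n ℂ) *
      diagonal (fun i => ((hA.eigenvalues i : ℝ) : ℂ)) *
      (hA.eigenvectorUnitary : Matrix n n ℂ)ᴴ := by
    conv_lhs => rw [hA.spectral_theorem]
    rfl
  have h1 := trace_mul_matLog hW hW2 g hAeq
  have h2 := trace_mul_matLog hU hUm hA.eigenvalues hspec
  rw [vnEntropy, dif_pos hA, sum_nlog_eq, h2.symm.trans h1, ← sum_nlog_eq]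

lemma trace_mul_conj_diag_re (σ : Matrix n n ℂ) (W : Matrix n n ℂ) (l : n → ℝ) :
    ((σ * (W * diagonal (fun i => ((l i : ℝ) : ℂ)) * Wᴴ)).trace).re
      = ∑ k, l k * ((Wᴴ * σ * W) k k).re := by
  have h1 : σ * (W * diagonal (fun i => ((l i : ℝ) : ℂ)) * Wᴴ)
      = (σ * W) * diagonal (fun i => ((l i : ℝ) : ℂ)) * Wᴴ := by
    simp only [Matrix.mul_assoc]
  rw [h1, Matrix.trace_mul_cycle]
  rw [Matrix.trace]
  simp only [Matrix.diag_apply, Matrix.mul_diagonal, ← Matrix.mul_assoc]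
  rw [Complex.re_sum]
  congr 1
  funext k
  simp [Complex.mul_re]
  ring

lemma psd_conj_diag_entry {σ : Matrix n n ℂ} (hσ : σ.PosSemidef) (W : Matrix n n ℂ) (k : n) :
    0 ≤ (Wᴴ * σ * W) k k := by
  have h := hσ.dotProduct_mulVec_nonneg (fun i => W i k)
  convert h using 1
  rw [Matrix.mul_apply, dotProduct]
  simp only [Matrix.mul_apply, Matrix.conjTranspose_apply, Matrix.mulVec, dotProduct,
    Pi.star_apply, Finset.sum_mul, Finset.mul_sum]
  rw [Finset.sum_comm]
  congr 1; funext i; congr 1; funext j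
  ring

section Block
variable {ι β : Type*} [Fintype ι] [DecidableEq ι] [Fintype β] [DecidableEq β]

def blockW (W : ι → Matrix β β ℂ) : Matrix (ι × β) (ι × β) ℂ :=
  Matrix.of fun x y => if x.1 = y.1 then W x.1 x.2 y.2 else 0

lemma blockW_conjTranspose (W : ι → Matrix β β ℂ) :
    (blockW W)ᴴ = blockW (fun i => (W i)ᴴ) := by
  ext x y
  simp only [blockW, Matrix.conjTranspose_apply, Matrix.of_apply, apply_ite star, star_zero]
  rcases eq_or_ne x.1 y.1 with h | h
  · simp [h]
  · simp [h, Ne.symm h]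

lemma blockW_mul (W V : ι → Matrix β β ℂ) :
    blockW W * blockW V = blockW (fun i => W i * V i) := by
  ext x y
  rw [Matrix.mul_apply, Fintype.sum_prod_type]
  simp only [blockW, Matrix.of_apply]
  have h : ∀ i : ι, (∑ b, (if x.1 = i then W x.1 x.2 b else 0) * (if i = y.1 then V i b y.2 else 0))
      = if x.1 = i then (if x.1 = y.1 then ∑ b, W x.1 x.2 b * V x.1 b y.2 else 0) else 0 := by
    intro i
    split_ifs with h1 h2 <;> simp_all
  simp_rw [h]
  rw [Finset.sum_ite_eq]
  simp [Matrix.mul_apply]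

lemma blockW_diagonal (v : β → ℂ) :
    diagonal (fun x : ι × β => v x.2) = blockW (fun _ => diagonal v) := by
  ext x y
  simp only [blockW, Matrix.diagonal_apply, Matrix.of_apply, Prod.ext_iff]
  rcases eq_or_ne x.1 y.1 with h | h
  · simp [h]
  · simp [h]

lemma blockW_one : blockW (fun _ : ι => (1 : Matrix β β ℂ)) = 1 := by
  ext x y
  simp only [blockW, Matrix.of_apply, Matrix.one_apply, Prod.ext_iff]
  rcases eq_or_ne x.1 y.1 with h | h
  · simp [h]
  · simp [h]

lemma vnEntropy_blockdiag (W : ι → Matrix β β ℂ) (hW : ∀ i, (W i)ᴴ * W i = 1) (g : β → ℝ) :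
    vnEntropy (Matrix.of fun x y : ι × β =>
      if x.1 = y.1 then (W x.1 * diagonal (fun k => ((g k : ℝ) : ℂ)) * (W x.1)ᴴ) x.2 y.2 else 0)
      = (Fintype.card ι : ℝ) * ∑ k, nlog (g k) := by
  have hW2 : ∀ i, W i * (W i)ᴴ = 1 := fun i => mul_eq_one_comm.mp (hW i)
  have hWB : (blockW W)ᴴ * blockW W = 1 := by
    rw [blockW_conjTranspose, blockW_mul]
    rw [show (fun i => (W i)ᴴ * W i) = fun _ : ι => (1 : Matrix β β ℂ) from funext hW]
    exact blockW_one
  have hWB2 : blockW W * (blockW W)ᴴ = 1 := mul_eq_one_comm.mp hWB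
  have hAeq : (Matrix.of fun x y : ι × β =>
      if x.1 = y.1 then (W x.1 * diagonal (fun k => ((g k : ℝ) : ℂ)) * (W x.1)ᴴ) x.2 y.2 else 0)
      = blockW W * diagonal (fun x : ι × β => ((g x.2 : ℝ) : ℂ)) * (blockW W)ᴴ := by
    rw [blockW_diagonal (fun k => ((g k : ℝ) : ℂ)), blockW_conjTranspose, blockW_mul, blockW_mul]
    rfl
  rw [vnEntropy_conj hWB hWB2 (fun x : ι × β => g x.2) hAeq, Fintype.sum_prod_type]
  simp [Finset.sum_const]

end Block

section Weyl
variable {d : ℕ} [NeZero d]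
open Fin.NatCast

def zeta (d : ℕ) (j : Fin d) : ℂ :=
  Complex.exp (2 * (Real.pi : ℂ) * Complex.I * ((j : ℕ) : ℂ) / (d : ℂ))

lemma hd0 : ((d : ℕ) : ℂ) ≠ 0 := Nat.cast_ne_zero.mpr (NeZero.ne d)

lemma weylZ_pow (b : ℕ) : weylZ d ^ b = diagonal (fun j => zeta d j ^ b) := by
  rw [weylZ, Matrix.diagonal_pow]
  rfl

lemma zeta_pow (j : Fin d) (b : ℕ) :
    zeta d j ^ b = Complex.exp (2 * (Real.pi : ℂ) * Complex.I * (((j : ℕ) : ℂ) * (b : ℂ)) / (d : ℂ)) := by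
  rw [zeta, ← Complex.exp_nat_mul]
  congr 1
  ring

lemma zeta_conj (k : Fin d) (b : ℕ) :
    (starRingEnd ℂ) (zeta d k ^ b)
      = Complex.exp (-(2 * (Real.pi : ℂ) * Complex.I * (((k : ℕ) : ℂ) * (b : ℂ)) / (d : ℂ))) := by
  rw [zeta_pow, ← Complex.exp_conj]
  congr 1
  simp [map_div₀, _root_.map_mul, map_ofNat, Complex.conj_I, Complex.conj_ofReal]
  ring

lemma zeta_conj_mul_self (k : Fin d) (b : ℕ) :
    (starRingEnd ℂ) (zeta d k ^ b) * zeta d k ^ b = 1 := by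
  rw [zeta_conj, zeta_pow, ← Complex.exp_add]
  simp

lemma zeta_sum (j k : Fin d) :
    ∑ b : Fin d, zeta d j ^ (b : ℕ) * (starRingEnd ℂ) (zeta d k ^ (b : ℕ))
      = if j = k then (d : ℂ) else 0 := by
  set w : ℂ := Complex.exp (2 * (Real.pi : ℂ) * Complex.I * (((j : ℕ) : ℂ) - ((k : ℕ) : ℂ)) / (d : ℂ)) with hw
  have hterm : ∀ b : ℕ, zeta d j ^ b * (starRingEnd ℂ) (zeta d k ^ b) = w ^ b := by
    intro b
    rw [zeta_pow, zeta_conj, ← Complex.exp_add, hw, ← Complex.exp_nat_mul]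
    congr 1
    ring
  simp_rw [hterm]
  rw [Fin.sum_univ_eq_sum_range (fun b => w ^ b) d]
  rcases eq_or_ne j k with h | h
  · subst h
    have : w = 1 := by rw [hw, sub_self, mul_zero, zero_div, Complex.exp_zero]
    rw [this]
    simp
  · have hvalne : ((j : ℕ) : ℂ) - ((k : ℕ) : ℂ) ≠ 0 := by
      intro hc
      apply h
      have : ((j : ℕ) : ℂ) = ((k : ℕ) : ℂ) := by linear_combination hc
      exact Fin.ext (by exact_mod_cast this)
    have hw1 : w ≠ 1 := by
      rw [hw]
      intro hc
      rw [Complex.exp_eq_one_iff] at hc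
      obtain ⟨m, hm⟩ := hc
      have hPI : (2 : ℂ) * (Real.pi : ℂ) * Complex.I ≠ 0 := by
        simp [Real.pi_ne_zero, Complex.I_ne_zero]
      have hdc : ((d : ℕ) : ℂ) ≠ 0 := hd0
      have h3 : ((((j : ℕ) : ℂ) - ((k : ℕ) : ℂ))) / (d : ℂ) = (m : ℂ) :=
        mul_left_cancel₀ hPI (by rw [← mul_div_assoc]; linear_combination hm)
      rw [div_eq_iff hdc] at h3
      have hint : ((j : ℕ) : ℤ) - ((k : ℕ) : ℤ) = m * (d : ℤ) := by exact_mod_cast h3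
      have hj := j.isLt
      have hk := k.isLt
      have hne : ((j : ℕ) : ℤ) ≠ ((k : ℕ) : ℤ) := by
        intro hc2
        exact h (Fin.ext (by exact_mod_cast hc2))
      have hdpos : (0 : ℤ) < (d : ℤ) := by exact_mod_cast Nat.pos_of_ne_zero (NeZero.ne d)
      rcases lt_trichotomy m 0 with hm0 | hm0 | hm0
      · have : m * (d : ℤ) ≤ -1 * (d : ℤ) :=
          mul_le_mul_of_nonneg_right (by omega) (by omega)
        omega
      · subst hm0; omega
      · have : 1 * (d : ℤ) ≤ m * (d : ℤ) :=
          mul_le_mul_of_nonneg_right (by omega) (by omega)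
        omega
    rw [geom_sum_eq hw1]
    have hwd : w ^ d = 1 := by
      rw [hw, ← Complex.exp_nat_mul]
      have : (d : ℂ) * (2 * (Real.pi : ℂ) * Complex.I * (((j : ℕ) : ℂ) - ((k : ℕ) : ℂ)) / (d : ℂ))
          = ((((j : ℕ) : ℤ) - ((k : ℕ) : ℤ) : ℤ) : ℂ) * (2 * (Real.pi : ℂ) * Complex.I) := by
        rw [mul_comm ((d : ℕ) : ℂ) _, div_mul_cancel₀ _ (hd0 (d := d))]
        push_cast
        ring
      rw [this, Complex.exp_int_mul_two_pi_mul_I]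
    rw [hwd]
    simp [h]

lemma deph (N : Matrix (Fin d) (Fin d) ℂ) :
    ∑ b : Fin d, weylZ d ^ (b : ℕ) * N * (weylZ d ^ (b : ℕ))ᴴ
      = (d : ℂ) • diagonal (fun j => N j j) := by
  ext j k
  rw [Matrix.sum_apply]
  have hterm : ∀ b : Fin d, (weylZ d ^ (b : ℕ) * N * (weylZ d ^ (b : ℕ))ᴴ) j k
      = N j k * (zeta d j ^ (b : ℕ) * (starRingEnd ℂ) (zeta d k ^ (b : ℕ))) := by
    intro b
    rw [weylZ_pow, Matrix.diagonal_conjTranspose, Matrix.mul_diagonal, Matrix.diagonal_mul]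
    simp [Pi.star_apply, Complex.star_def]
    ring
  simp_rw [hterm]
  rw [← Finset.mul_sum, zeta_sum]
  simp only [Matrix.smul_apply, Matrix.diagonal_apply, smul_eq_mul]
  rcases eq_or_ne j k with h | h
  · subst h; simp; ring
  · simp [h]

lemma weylX_apply' (j k : Fin d) : weylX d j k = if j = k + 1 then 1 else 0 := by
  have hval : ((k : ℕ) + 1) % d = ((k + 1 : Fin d) : ℕ) := by
    rw [Fin.add_def]
    simp [Fin.val_one', Nat.add_mod, Nat.mod_eq_of_lt k.isLt]
  rw [weylX]
  simp only [Matrix.of_apply]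
  by_cases hc : j = k + 1
  · subst hc
    simp [hval]
  · have : ¬ ((j : ℕ) = ((k : ℕ) + 1) % d) := fun hcc => hc (Fin.ext (hcc.trans hval))
    simp [hc, this]

lemma weylX_pow (m : ℕ) :
    weylX d ^ m = Matrix.of (fun j k : Fin d => if j = k + (m : Fin d) then 1 else 0) := by
  induction m with
  | zero =>
    ext j k
    simp [Matrix.one_apply]
  | succ m ih =>
    rw [pow_succ, ih]
    ext j k
    rw [Matrix.mul_apply]
    simp only [Matrix.of_apply, weylX_apply']
    have hterm : ∀ l : Fin d,
        (if j = l + (m : Fin d) then (1 : ℂ) else 0) * (if l = k + 1 then 1 else 0)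
        = if l = k + 1 then (if j = l + (m : Fin d) then (1 : ℂ) else 0) else 0 := by
      intro l; split_ifs <;> simp_all
    simp_rw [hterm]
    rw [Finset.sum_ite_eq']
    have hcond : (j = k + 1 + (m : Fin d)) ↔ (j = k + ((m + 1 : ℕ) : Fin d)) := by
      constructor <;> intro h <;> (rw [h]; push_cast; abel)
    simp only [Finset.mem_univ, if_true]
    rcases eq_or_ne j (k + 1 + (m : Fin d)) with h | h
    · rw [if_pos h, if_pos (hcond.mp h)]
    · rw [if_neg h, if_neg (fun hc => h (hcond.mpr hc))]

lemma weylX_pow_unitary (m : ℕ) : (weylX d ^ m)ᴴ * (weylX d ^ m) = 1 := by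
  ext j k
  rw [Matrix.mul_apply]
  simp only [weylX_pow, Matrix.conjTranspose_apply, Matrix.of_apply, Matrix.one_apply,
    apply_ite star, star_one, star_zero]
  have hterm : ∀ l : Fin d,
      (if l = j + (m : Fin d) then (1 : ℂ) else 0) * (if l = k + (m : Fin d) then 1 else 0)
      = if l = j + (m : Fin d) then (if j = k then (1 : ℂ) else 0) else 0 := by
    intro l
    rcases eq_or_ne l (j + (m : Fin d)) with h1 | h1
    · subst h1
      rcases eq_or_ne j k with h2 | h2
      · subst h2; simp
      · have h3 : j + (m : Fin d) ≠ k + (m : Fin d) := fun hc => h2 (add_right_cancel hc)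
        simp [h2, h3]
    · simp [h1]
  simp_rw [hterm]
  rw [Finset.sum_ite_eq']
  simp

lemma weylZ_pow_unitary (b : ℕ) : (weylZ d ^ b)ᴴ * (weylZ d ^ b) = 1 := by
  rw [weylZ_pow, Matrix.diagonal_conjTranspose, Matrix.diagonal_mul_diagonal]
  have hfun : (fun i : Fin d => star (fun j : Fin d => zeta d j ^ b) i * zeta d i ^ b)
      = fun _ : Fin d => (1 : ℂ) := by
    funext i
    simp only [Pi.star_apply, Complex.star_def]
    exact zeta_conj_mul_self i b
  rw [hfun, Matrix.diagonal_one]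

lemma shift (f : Fin d → ℂ) :
    ∑ a : Fin d, weylX d ^ ((a : Fin d) : ℕ) * diagonal f * (weylX d ^ ((a : Fin d) : ℕ))ᴴ
      = (∑ j, f j) • (1 : Matrix (Fin d) (Fin d) ℂ) := by
  ext j k
  rw [Matrix.sum_apply]
  have hterm : ∀ a : Fin d, (weylX d ^ ((a : Fin d) : ℕ) * diagonal f * (weylX d ^ ((a : Fin d) : ℕ))ᴴ) j k
      = if j = k then f (j - a) else 0 := by
    intro a
    rw [Matrix.mul_apply]
    simp only [weylX_pow, Matrix.mul_diagonal, Matrix.conjTranspose_apply, Matrix.of_apply,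
      Fin.cast_val_eq_self, apply_ite star, star_one, star_zero]
    rw [Finset.sum_eq_single (j - a)]
    · have hja : j - a + a = j := by abel
      rw [if_pos hja.symm, one_mul, hja]
      rcases eq_or_ne j k with h | h
      · subst h; simp
      · rw [if_neg h, if_neg (fun hc : k = j => h hc.symm), mul_zero]
    · intro l _ hl
      rw [if_neg (fun hc : j = l + a => hl (by rw [hc, add_sub_cancel_right])), zero_mul, zero_mul]
    · intro hmem
      exact absurd (Finset.mem_univ _) hmem
  simp_rw [hterm]
  rcases eq_or_ne j k with h | h
  · subst h
    simp only [if_pos rfl, Matrix.smul_apply, Matrix.one_apply_eq, smul_eq_mul, mul_one]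
    exact Fintype.sum_equiv (Equiv.subLeft j) _ _ (fun a => rfl)
  · simp [h, Matrix.one_apply_ne h]

lemma twirl_scalar (N : Matrix (Fin d) (Fin d) ℂ) :
    ∑ a : Fin d, ∑ b : Fin d,
      (weylX d ^ ((a : Fin d) : ℕ) * weylZ d ^ ((b : Fin d) : ℕ)) * N *
        (weylX d ^ ((a : Fin d) : ℕ) * weylZ d ^ ((b : Fin d) : ℕ))ᴴ
      = ((d : ℂ) * N.trace) • (1 : Matrix (Fin d) (Fin d) ℂ) := by
  have h1 : ∀ a : Fin d, ∑ b : Fin d,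
      (weylX d ^ ((a : Fin d) : ℕ) * weylZ d ^ ((b : Fin d) : ℕ)) * N *
        (weylX d ^ ((a : Fin d) : ℕ) * weylZ d ^ ((b : Fin d) : ℕ))ᴴ
      = weylX d ^ ((a : Fin d) : ℕ) * ((d : ℂ) • diagonal (fun j => N j j)) *
        (weylX d ^ ((a : Fin d) : ℕ))ᴴ := by
    intro a
    rw [← deph (d := d) N, Finset.mul_sum, Finset.sum_mul]
    congr 1
    funext b
    rw [Matrix.conjTranspose_mul]
    simp only [Matrix.mul_assoc]
  simp_rw [h1]
  have h2 : ∀ a : Fin d, weylX d ^ ((a : Fin d) : ℕ) * ((d : ℂ) • diagonal (fun j => N j j)) *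
      (weylX d ^ ((a : Fin d) : ℕ))ᴴ
      = (d : ℂ) • (weylX d ^ ((a : Fin d) : ℕ) * diagonal (fun j => N j j) *
        (weylX d ^ ((a : Fin d) : ℕ))ᴴ) := by
    intro a
    rw [Matrix.mul_smul, Matrix.smul_mul]
  simp_rw [h2]
  rw [← Finset.smul_sum, shift]
  rw [smul_smul, Matrix.trace]
  rfl

end Weyl

section Kron
variable {d : ℕ} [NeZero d] {F : Type*} [Fintype F] [DecidableEq F]

lemma kron_conjTranspose (A : Matrix (Fin d) (Fin d) ℂ) (B : Matrix F F ℂ) :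
    (A ⊗ₖ B)ᴴ = Aᴴ ⊗ₖ Bᴴ := by
  ext x y
  simp [Matrix.conjTranspose_apply, Matrix.kroneckerMap_apply, star_mul']

lemma kron_one_unitary {A : Matrix (Fin d) (Fin d) ℂ} (hA : Aᴴ * A = 1) :
    (A ⊗ₖ (1 : Matrix F F ℂ))ᴴ * (A ⊗ₖ (1 : Matrix F F ℂ)) = 1 := by
  rw [kron_conjTranspose, Matrix.conjTranspose_one, ← Matrix.mul_kronecker_mul, hA,
    Matrix.one_mul, Matrix.one_kronecker_one]

lemma trace_conj_unitary {n : Type*} [Fintype n] [DecidableEq n] {W σ : Matrix n n ℂ}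
    (hW : Wᴴ * W = 1) : (W * σ * Wᴴ).trace = σ.trace := by
  rw [Matrix.trace_mul_cycle, hW, Matrix.one_mul]

def blk (ρ : Matrix (Fin d × F) (Fin d × F) ℂ) (e e' : F) : Matrix (Fin d) (Fin d) ℂ :=
  Matrix.of fun j k => ρ (j, e) (k, e')

lemma conj_kron_apply (C : Matrix (Fin d) (Fin d) ℂ) (ρ : Matrix (Fin d × F) (Fin d × F) ℂ)
    (j k : Fin d) (e e' : F) :
    ((C ⊗ₖ (1 : Matrix F F ℂ)) * ρ * (C ⊗ₖ (1 : Matrix F F ℂ))ᴴ) (j, e) (k, e')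
      = (C * blk ρ e e' * Cᴴ) j k := by
  rw [kron_conjTranspose, Matrix.conjTranspose_one]
  simp only [Matrix.mul_apply, Matrix.kroneckerMap_apply, Matrix.one_apply, blk,
    Matrix.of_apply, Fintype.sum_prod_type, mul_ite, ite_mul, mul_one, mul_zero, zero_mul,
    one_mul, Finset.sum_ite_irrel, Finset.sum_const_zero, Finset.sum_ite_eq,
    Finset.sum_ite_eq', Finset.mem_univ, if_true]

lemma ptraceL_conj (C : Matrix (Fin d) (Fin d) ℂ) (hC : Cᴴ * C = 1)
    (ρ : Matrix (Fin d × F) (Fin d × F) ℂ) :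
    ptraceL ((C ⊗ₖ (1 : Matrix F F ℂ)) * ρ * (C ⊗ₖ (1 : Matrix F F ℂ))ᴴ) = ptraceL ρ := by
  ext e e'
  simp only [ptraceL, Matrix.of_apply]
  calc ∑ j, ((C ⊗ₖ (1 : Matrix F F ℂ)) * ρ * (C ⊗ₖ (1 : Matrix F F ℂ))ᴴ) (j, e) (j, e')
      = ∑ j, (C * blk ρ e e' * Cᴴ) j j :=
        Finset.sum_congr rfl fun j _ => conj_kron_apply C ρ j j e e'
    _ = (C * blk ρ e e' * Cᴴ).trace := rfl
    _ = (blk ρ e e').trace := trace_conj_unitary hC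
    _ = ∑ j, ρ (j, e) (j, e') := rfl

lemma blk_trace (ρ : Matrix (Fin d × F) (Fin d × F) ℂ) (e e' : F) :
    (blk ρ e e').trace = ptraceL ρ e e' := rfl

lemma twirl_kron (ρ : Matrix (Fin d × F) (Fin d × F) ℂ) :
    ∑ a : Fin d, ∑ b : Fin d,
      ((weylX d ^ ((a : Fin d) : ℕ) * weylZ d ^ ((b : Fin d) : ℕ)) ⊗ₖ (1 : Matrix F F ℂ)) * ρ *
        ((weylX d ^ ((a : Fin d) : ℕ) * weylZ d ^ ((b : Fin d) : ℕ)) ⊗ₖ (1 : Matrix F F ℂ))ᴴ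
      = (d : ℂ) • ((1 : Matrix (Fin d) (Fin d) ℂ) ⊗ₖ ptraceL ρ) := by
  ext ⟨j, e⟩ ⟨k, e'⟩
  have h2 := congrFun (congrFun (twirl_scalar (d := d) (blk ρ e e')) j) k
  simp only [Matrix.sum_apply] at h2 ⊢
  simp_rw [conj_kron_apply]
  rw [h2]
  simp only [Matrix.smul_apply, Matrix.one_apply, Matrix.kroneckerMap_apply, smul_eq_mul,
    ← blk_trace]
  rcases eq_or_ne j k with h | h
  · simp [h]
  · simp [h]

lemma exp_mod (s b : ℕ) :
    Complex.exp (2 * (Real.pi : ℂ) * Complex.I * (((s % d : ℕ) : ℂ) * (b : ℂ)) / (d : ℂ))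
      = Complex.exp (2 * (Real.pi : ℂ) * Complex.I * ((s : ℂ) * (b : ℂ)) / (d : ℂ)) := by
  obtain ⟨q, r, hqr, hrd⟩ : ∃ q r : ℕ, s = d * q + r ∧ s % d = r :=
    ⟨s / d, s % d, (Nat.div_add_mod s d).symm, rfl⟩
  rw [hrd]
  have hs : (s : ℂ) = (d : ℂ) * (q : ℂ) + (r : ℂ) := by exact_mod_cast congrArg (Nat.cast : ℕ → ℂ) hqr
  rw [hs]
  have hsplit : 2 * (Real.pi : ℂ) * Complex.I *
        (((d : ℂ) * (q : ℂ) + (r : ℂ)) * (b : ℂ)) / (d : ℂ)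
      = (((q * b : ℕ) : ℤ) : ℂ) * (2 * (Real.pi : ℂ) * Complex.I) +
        2 * (Real.pi : ℂ) * Complex.I * ((r : ℂ) * (b : ℂ)) / (d : ℂ) := by
    push_cast
    field_simp [hd0 (d := d)]
  rw [hsplit, Complex.exp_add, Complex.exp_int_mul_two_pi_mul_I, one_mul]

lemma weyl_comm (a b : Fin d) :
    weylZ d ^ ((b : Fin d) : ℕ) * weylX d ^ ((a : Fin d) : ℕ)
      = Complex.exp (2 * (Real.pi : ℂ) * Complex.I *
          ((((a : Fin d) : ℕ) : ℂ) * (((b : Fin d) : ℕ) : ℂ)) / (d : ℂ)) •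
        (weylX d ^ ((a : Fin d) : ℕ) * weylZ d ^ ((b : Fin d) : ℕ)) := by
  ext j k
  rw [weylX_pow, weylZ_pow, Matrix.diagonal_mul, Matrix.smul_apply, Matrix.mul_diagonal]
  simp only [Matrix.of_apply, Fin.cast_val_eq_self]
  rcases eq_or_ne j (k + a) with h | h
  · subst h
    rw [zeta_pow, zeta_pow]
    have hval : ((k + a : Fin d) : ℕ) = ((k : ℕ) + (a : ℕ)) % d := by rw [Fin.add_def]
    rw [hval, exp_mod ((k : ℕ) + (a : ℕ)) b]
    simp only [if_pos rfl, if_true, mul_one, smul_eq_mul, one_mul]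
    rw [← Complex.exp_add]
    congr 1
    push_cast
    ring
  · simp [h]

lemma conj_smul_unit {n : Type*} [Fintype n] {c : ℂ} (hc : c * star c = 1)
    (A ρ : Matrix n n ℂ) : (c • A) * ρ * (c • A)ᴴ = A * ρ * Aᴴ := by
  rw [Matrix.conjTranspose_smul, Matrix.smul_mul, Matrix.smul_mul, Matrix.mul_smul, smul_smul,
    hc, one_smul]

lemma exp_star_unit (u : ℂ) (hu : (starRingEnd ℂ) u = -u) :
    Complex.exp u * star (Complex.exp u) = 1 := by
  rw [Complex.star_def, ← Complex.exp_conj, hu, ← Complex.exp_add, add_neg_cancel,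
    Complex.exp_zero]

lemma comm_conj (a b : Fin d) (ρ : Matrix (Fin d × F) (Fin d × F) ℂ) :
    ((weylX d ^ ((a : Fin d) : ℕ) * weylZ d ^ ((b : Fin d) : ℕ)) ⊗ₖ (1 : Matrix F F ℂ)) * ρ *
        ((weylX d ^ ((a : Fin d) : ℕ) * weylZ d ^ ((b : Fin d) : ℕ)) ⊗ₖ (1 : Matrix F F ℂ))ᴴ
      = ((weylZ d ^ ((b : Fin d) : ℕ)) ⊗ₖ (1 : Matrix F F ℂ)) *
          (((weylX d ^ ((a : Fin d) : ℕ)) ⊗ₖ (1 : Matrix F F ℂ)) * ρ *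
            ((weylX d ^ ((a : Fin d) : ℕ)) ⊗ₖ (1 : Matrix F F ℂ))ᴴ) *
          ((weylZ d ^ ((b : Fin d) : ℕ)) ⊗ₖ (1 : Matrix F F ℂ))ᴴ := by
  set c : ℂ := Complex.exp (2 * (Real.pi : ℂ) * Complex.I *
      ((((a : Fin d) : ℕ) : ℂ) * (((b : Fin d) : ℕ) : ℂ)) / (d : ℂ)) with hcdef
  have hstar : c * star c = 1 := by
    apply exp_star_unit
    simp [map_div₀, _root_.map_mul, map_ofNat, Complex.conj_I, Complex.conj_ofReal]
    ring
  have h1 : ((weylZ d ^ ((b : Fin d) : ℕ) * weylX d ^ ((a : Fin d) : ℕ)) ⊗ₖ (1 : Matrix F F ℂ))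
      = c • ((weylX d ^ ((a : Fin d) : ℕ) * weylZ d ^ ((b : Fin d) : ℕ)) ⊗ₖ (1 : Matrix F F ℂ)) := by
    rw [weyl_comm a b, Matrix.smul_kronecker]
  have h2 : ((weylZ d ^ ((b : Fin d) : ℕ)) ⊗ₖ (1 : Matrix F F ℂ)) *
        (((weylX d ^ ((a : Fin d) : ℕ)) ⊗ₖ (1 : Matrix F F ℂ)) * ρ *
          ((weylX d ^ ((a : Fin d) : ℕ)) ⊗ₖ (1 : Matrix F F ℂ))ᴴ) *
        ((weylZ d ^ ((b : Fin d) : ℕ)) ⊗ₖ (1 : Matrix F F ℂ))ᴴ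
      = ((weylZ d ^ ((b : Fin d) : ℕ) * weylX d ^ ((a : Fin d) : ℕ)) ⊗ₖ (1 : Matrix F F ℂ)) * ρ *
        ((weylZ d ^ ((b : Fin d) : ℕ) * weylX d ^ ((a : Fin d) : ℕ)) ⊗ₖ (1 : Matrix F F ℂ))ᴴ := by
    have hsplitZ : ((weylZ d ^ ((b : Fin d) : ℕ) * weylX d ^ ((a : Fin d) : ℕ)) ⊗ₖ (1 : Matrix F F ℂ))
        = ((weylZ d ^ ((b : Fin d) : ℕ)) ⊗ₖ (1 : Matrix F F ℂ)) *
          ((weylX d ^ ((a : Fin d) : ℕ)) ⊗ₖ (1 : Matrix F F ℂ)) := by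
      rw [← Matrix.mul_kronecker_mul, Matrix.one_mul]
    rw [hsplitZ, Matrix.conjTranspose_mul]
    simp only [Matrix.mul_assoc]
  rw [h2, h1, conj_smul_unit hstar]

end Kron

section States
variable {n : Type*} [Fintype n] [DecidableEq n]

lemma mul_unitary {A B : Matrix n n ℂ} (hA : Aᴴ * A = 1) (hB : Bᴴ * B = 1) :
    (A * B)ᴴ * (A * B) = 1 := by
  rw [Matrix.conjTranspose_mul]
  calc Bᴴ * Aᴴ * (A * B) = Bᴴ * (Aᴴ * A) * B := by simp only [Matrix.mul_assoc]
    _ = 1 := by rw [hA, Matrix.mul_one, hB]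

lemma ketbra_posSemidef (v : n → ℂ) : (ketbra v).PosSemidef := by
  refine Matrix.PosSemidef.of_dotProduct_mulVec_nonneg ?_ ?_
  · ext i j
    simp only [ketbra, Matrix.conjTranspose_apply, Matrix.of_apply, star_mul', star_star]
    ring
  · intro x
    have hcalc : dotProduct (star x) ((ketbra v) *ᵥ x)
        = (∑ i, star (x i) * v i) * star (∑ i, star (x i) * v i) := by
      simp only [dotProduct, Matrix.mulVec, dotProduct, ketbra, Matrix.of_apply, Pi.star_apply,
        Finset.mul_sum, Finset.sum_mul, star_sum, star_mul', star_star]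
      rw [Finset.sum_comm]
      congr 1
      funext i
      congr 1
      funext j
      ring
    rw [hcalc]
    exact mul_star_self_nonneg _

lemma maxEnt_eq_ketbra : maxEnt n
    = ketbra (fun x : n × n =>
        if x.1 = x.2 then (((Real.sqrt (Fintype.card n) : ℝ) : ℂ))⁻¹ else 0) := by
  ext x y
  simp only [maxEnt, ketbra, Matrix.of_apply]
  by_cases h1 : x.1 = x.2 <;> by_cases h2 : y.1 = y.2 <;> simp [h1, h2]
  have hsq : ((Real.sqrt (Fintype.card n) : ℝ) : ℂ) * ((Real.sqrt (Fintype.card n) : ℝ) : ℂ)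
      = ((Fintype.card n : ℕ) : ℂ) := by
    rw [← Complex.ofReal_mul, Real.mul_self_sqrt (by positivity)]
    norm_cast
  rw [← mul_inv, hsq]

lemma maxEnt_posSemidef : (maxEnt n).PosSemidef := by
  rw [maxEnt_eq_ketbra]
  exact ketbra_posSemidef _

lemma maxEnt_trace (h : (0 : ℕ) < Fintype.card n) : (maxEnt n).trace = 1 := by
  rw [Matrix.trace]
  simp only [Matrix.diag_apply, maxEnt, Matrix.of_apply, and_self]
  rw [Fintype.sum_prod_type]
  simp only [Finset.sum_ite_eq, Finset.mem_univ, if_true]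
  rw [Finset.sum_const, Finset.card_univ, nsmul_eq_mul, mul_inv_cancel₀]
  exact Nat.cast_ne_zero.mpr (Nat.pos_iff_ne_zero.mp h)

lemma posSemidef_sum {ι : Type*} [Fintype ι] (f : ι → Matrix n n ℂ)
    (h : ∀ i, (f i).PosSemidef) : (∑ i, f i).PosSemidef :=
  Finset.sum_induction f _ (fun _ _ ha hb => ha.add hb) Matrix.PosSemidef.zero fun i _ => h i

lemma posSemidef_real_smul {c : ℝ} (hc : 0 ≤ c) {M : Matrix n n ℂ} (hM : M.PosSemidef) :
    (((c : ℝ) : ℂ) • M).PosSemidef := by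
  refine Matrix.PosSemidef.of_dotProduct_mulVec_nonneg ?_ ?_
  · rw [Matrix.IsHermitian, Matrix.conjTranspose_smul, Complex.star_def, Complex.conj_ofReal,
      hM.1.eq]
  · intro x
    rw [Matrix.smul_mulVec, dotProduct_smul, smul_eq_mul]
    exact mul_nonneg (by exact_mod_cast Complex.zero_le_real.mpr hc) (hM.dotProduct_mulVec_nonneg x)

lemma sum_eigenvalues_eq_one {M : Matrix n n ℂ} (hM : M.IsHermitian) (htr : M.trace = 1) :
    ∑ i, hM.eigenvalues i = 1 := by
  have hUm := hM.eigenvectorUnitary.2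
  rw [Matrix.mem_unitaryGroup_iff, Matrix.star_eq_conjTranspose] at hUm
  have hU : (hM.eigenvectorUnitary : Matrix n n ℂ)ᴴ * (hM.eigenvectorUnitary : Matrix n n ℂ) = 1 :=
    mul_eq_one_comm.mp hUm
  have hspec : M = (hM.eigenvectorUnitary : Matrix n n ℂ) *
      diagonal (fun i => ((hM.eigenvalues i : ℝ) : ℂ)) *
      (hM.eigenvectorUnitary : Matrix n n ℂ)ᴴ := by
    conv_lhs => rw [hM.spectral_theorem]
    rfl
  have h2 : M.trace = ∑ i, ((hM.eigenvalues i : ℝ) : ℂ) := by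
    conv_lhs => rw [hspec]
    exact trace_conj_diag hU _
  rw [htr] at h2
  exact_mod_cast h2.symm

lemma nlog_div (c : ℝ) (hc : 0 < c) (x : ℝ) (hx : 0 ≤ x) :
    c * nlog (x / c) = nlog x + x * Real.logb 2 c := by
  rcases eq_or_lt_of_le hx with h0 | h0
  · rw [← h0]
    simp [nlog]
  · rw [nlog, nlog, Real.logb_div (ne_of_gt h0) (ne_of_gt hc)]
    field_simp
    ring

lemma vnEntropy_diag_real (g : n → ℝ) :
    vnEntropy (diagonal (fun i => ((g i : ℝ) : ℂ))) = ∑ i, nlog (g i) := by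
  refine vnEntropy_conj (W := (1 : Matrix n n ℂ)) (by simp) (by simp) g ?_
  simp

end States

section Key
variable {d : ℕ} [NeZero d] {F : Type*} [Fintype F] [DecidableEq F]

lemma trace_matLog_self_re {n : Type*} [Fintype n] [DecidableEq n]
    {σ : Matrix n n ℂ} (hσ : σ.IsHermitian) :
    ((σ * matLog σ).trace).re = - vnEntropy σ := by
  have hUm := hσ.eigenvectorUnitary.2
  rw [Matrix.mem_unitaryGroup_iff, Matrix.star_eq_conjTranspose] at hUm
  have hU : (hσ.eigenvectorUnitary : Matrix n n ℂ)ᴴ * (hσ.eigenvectorUnitary : Matrix n n ℂ) = 1 :=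
    mul_eq_one_comm.mp hUm
  have hspec : σ = (hσ.eigenvectorUnitary : Matrix n n ℂ) *
      diagonal (fun i => ((hσ.eigenvalues i : ℝ) : ℂ)) *
      (hσ.eigenvectorUnitary : Matrix n n ℂ)ᴴ := by
    conv_lhs => rw [hσ.spectral_theorem]
    rfl
  rw [trace_mul_matLog hU hUm hσ.eigenvalues hspec, vnEntropy, dif_pos hσ, sum_nlog_eq, neg_neg]

lemma one_kron_unitary {V : Matrix F F ℂ} (hV : Vᴴ * V = 1) :
    ((1 : Matrix (Fin d) (Fin d) ℂ) ⊗ₖ V)ᴴ * ((1 : Matrix (Fin d) (Fin d) ℂ) ⊗ₖ V) = 1 := by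
  rw [kron_conjTranspose, Matrix.conjTranspose_one, ← Matrix.mul_kronecker_mul,
    Matrix.one_mul, hV, Matrix.one_kronecker_one]

lemma one_kron_diagonal (v : F → ℂ) :
    (1 : Matrix (Fin d) (Fin d) ℂ) ⊗ₖ diagonal v = diagonal (fun x : Fin d × F => v x.2) := by
  ext x y
  simp only [Matrix.kroneckerMap_apply, Matrix.one_apply, Matrix.diagonal_apply, Prod.ext_iff]
  rcases eq_or_ne x.1 y.1 with h | h <;> rcases eq_or_ne x.2 y.2 with h2 | h2 <;> simp [h, h2]

lemma mmix_kron_decomp {M : Matrix F F ℂ} (hM : M.IsHermitian) :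
    mmix (Fin d) ⊗ₖ M
      = ((1 : Matrix (Fin d) (Fin d) ℂ) ⊗ₖ (hM.eigenvectorUnitary : Matrix F F ℂ)) *
        diagonal (fun x : Fin d × F => ((hM.eigenvalues x.2 / d : ℝ) : ℂ)) *
        ((1 : Matrix (Fin d) (Fin d) ℂ) ⊗ₖ (hM.eigenvectorUnitary : Matrix F F ℂ))ᴴ := by
  set V := (hM.eigenvectorUnitary : Matrix F F ℂ) with hVdef
  have hspec : M = V * diagonal (fun i => ((hM.eigenvalues i : ℝ) : ℂ)) * Vᴴ := by
    conv_lhs => rw [hM.spectral_theorem]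
    rfl
  have h1 : mmix (Fin d) ⊗ₖ M = ((d : ℕ) : ℂ)⁻¹ • ((1 : Matrix (Fin d) (Fin d) ℂ) ⊗ₖ M) := by
    rw [mmix, Fintype.card_fin, Matrix.smul_kronecker]
  rw [h1]
  conv_lhs => rw [hspec]
  have h2 : (1 : Matrix (Fin d) (Fin d) ℂ) ⊗ₖ
        (V * diagonal (fun i => ((hM.eigenvalues i : ℝ) : ℂ)) * Vᴴ)
      = ((1 : Matrix (Fin d) (Fin d) ℂ) ⊗ₖ V) *
        ((1 : Matrix (Fin d) (Fin d) ℂ) ⊗ₖ diagonal (fun i => ((hM.eigenvalues i : ℝ) : ℂ))) *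
        ((1 : Matrix (Fin d) (Fin d) ℂ) ⊗ₖ Vᴴ) := by
    rw [← Matrix.mul_kronecker_mul, ← Matrix.mul_kronecker_mul, Matrix.one_mul, Matrix.one_mul]
  rw [h2, one_kron_diagonal, kron_conjTranspose, Matrix.conjTranspose_one]
  have h3 : ((d : ℕ) : ℂ)⁻¹ • diagonal (fun x : Fin d × F => ((hM.eigenvalues x.2 : ℝ) : ℂ))
      = diagonal (fun x : Fin d × F => ((hM.eigenvalues x.2 / d : ℝ) : ℂ)) := by
    ext x y
    rcases eq_or_ne x y with h | h
    · subst h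
      rw [Matrix.smul_apply, Matrix.diagonal_apply_eq, Matrix.diagonal_apply_eq, smul_eq_mul]
      push_cast
      ring
    · rw [Matrix.smul_apply, Matrix.diagonal_apply_ne _ h, Matrix.diagonal_apply_ne _ h,
        smul_zero]
  rw [← h3, Matrix.mul_smul, Matrix.smul_mul]

def blkR (σ : Matrix (Fin d × F) (Fin d × F) ℂ) (i i' : Fin d) : Matrix F F ℂ :=
  Matrix.of fun e e' => σ (i, e) (i', e')

lemma conj_kron_apply' (V : Matrix F F ℂ) (σ : Matrix (Fin d × F) (Fin d × F) ℂ)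
    (i i' : Fin d) (j j' : F) :
    ((((1 : Matrix (Fin d) (Fin d) ℂ) ⊗ₖ V)ᴴ * σ * ((1 : Matrix (Fin d) (Fin d) ℂ) ⊗ₖ V)) (i, j) (i', j'))
      = (Vᴴ * blkR σ i i' * V) j j' := by
  rw [kron_conjTranspose, Matrix.conjTranspose_one]
  simp only [Matrix.mul_apply, Matrix.kroneckerMap_apply, Matrix.one_apply, blkR,
    Matrix.of_apply, Matrix.conjTranspose_apply, Fintype.sum_prod_type, mul_ite, ite_mul,
    mul_one, mul_zero, zero_mul, one_mul, Finset.sum_ite_irrel, Finset.sum_const_zero,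
    Finset.sum_ite_eq, Finset.sum_ite_eq', Finset.mem_univ, if_true]

lemma sum_blkR (σ : Matrix (Fin d × F) (Fin d × F) ℂ) :
    ∑ i : Fin d, blkR σ i i = ptraceL σ := by
  ext e e'
  rw [Matrix.sum_apply]
  rfl

lemma relEnt_key {M : Matrix F F ℂ} (hM : M.PosSemidef) (hMtr : M.trace = 1)
    {σ : Matrix (Fin d × F) (Fin d × F) ℂ} (hσ : σ.PosSemidef) (hσtr : σ.trace = 1)
    (hmarg : ptraceL σ = M) :
    relEnt σ (mmix (Fin d) ⊗ₖ M) = - vnEntropy σ + Real.logb 2 d + vnEntropy M := by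
  set V := (hM.1.eigenvectorUnitary : Matrix F F ℂ) with hVdef
  have hVm : V * Vᴴ = 1 := by
    have := hM.1.eigenvectorUnitary.2
    rwa [Matrix.mem_unitaryGroup_iff, Matrix.star_eq_conjTranspose] at this
  have hV : Vᴴ * V = 1 := mul_eq_one_comm.mp hVm
  set W := (1 : Matrix (Fin d) (Fin d) ℂ) ⊗ₖ V with hWdef
  have hW : Wᴴ * W = 1 := one_kron_unitary hV
  have hW2 : W * Wᴴ = 1 := mul_eq_one_comm.mp hW
  have hωeq : mmix (Fin d) ⊗ₖ M = W *
      diagonal (fun x : Fin d × F => ((hM.1.eigenvalues x.2 / d : ℝ) : ℂ)) * Wᴴ :=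
    mmix_kron_decomp hM.1
  rw [relEnt, Matrix.mul_sub, Matrix.trace_sub, Complex.sub_re, trace_matLog_self_re hσ.1,
    matLog_conj hW hW2 (fun x : Fin d × F => hM.1.eigenvalues x.2 / d) hωeq,
    trace_mul_conj_diag_re]
  have hQsum : ∀ j : F, (∑ i : Fin d, ((Wᴴ * σ * W) (i, j) (i, j)).re) = hM.1.eigenvalues j := by
    intro j
    have hVMV : (Vᴴ * M * V) j j = ((hM.1.eigenvalues j : ℝ) : ℂ) := by
      have hst := hM.1.conjStarAlgAut_star_eigenvectorUnitary
      simp only [Unitary.conjStarAlgAut_apply, Unitary.coe_star, star_star] at hst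
      rw [Matrix.star_eq_conjTranspose] at hst
      rw [hst, Matrix.diagonal_apply_eq]
      rfl
    have hsum : (∑ i : Fin d, (Wᴴ * σ * W) (i, j) (i, j)) = ((hM.1.eigenvalues j : ℝ) : ℂ) := by
      rw [hWdef]
      calc ∑ i : Fin d, ((((1 : Matrix (Fin d) (Fin d) ℂ) ⊗ₖ V)ᴴ * σ *
            ((1 : Matrix (Fin d) (Fin d) ℂ) ⊗ₖ V)) (i, j) (i, j))
          = ∑ i : Fin d, (Vᴴ * blkR σ i i * V) j j :=
            Finset.sum_congr rfl fun i _ => conj_kron_apply' V σ i i j j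
        _ = (Vᴴ * (∑ i : Fin d, blkR σ i i) * V) j j := by
            rw [Matrix.mul_sum, Matrix.sum_mul, Matrix.sum_apply]
        _ = (Vᴴ * M * V) j j := by rw [sum_blkR, hmarg]
        _ = ((hM.1.eigenvalues j : ℝ) : ℂ) := hVMV
    calc (∑ i : Fin d, ((Wᴴ * σ * W) (i, j) (i, j)).re)
        = (∑ i : Fin d, (Wᴴ * σ * W) (i, j) (i, j)).re := (Complex.re_sum _ _).symm
      _ = hM.1.eigenvalues j := by rw [hsum, Complex.ofReal_re]
  have hsplit : (∑ x : Fin d × F, Real.logb 2 (hM.1.eigenvalues x.2 / d) * ((Wᴴ * σ * W) x x).re)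
      = ∑ j : F, Real.logb 2 (hM.1.eigenvalues j / d) * hM.1.eigenvalues j := by
    rw [Fintype.sum_prod_type, Finset.sum_comm]
    refine Finset.sum_congr rfl fun j _ => ?_
    calc ∑ x : Fin d, Real.logb 2 (hM.1.eigenvalues (x, j).2 / d) * ((Wᴴ * σ * W) (x, j) (x, j)).re
        = Real.logb 2 (hM.1.eigenvalues j / d) * ∑ x : Fin d, ((Wᴴ * σ * W) (x, j) (x, j)).re := by
          rw [Finset.mul_sum]
      _ = _ := by rw [hQsum j]
  rw [hsplit]
  have hperj : ∀ j : F, Real.logb 2 (hM.1.eigenvalues j / d) * hM.1.eigenvalues j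
      = hM.1.eigenvalues j * Real.logb 2 (hM.1.eigenvalues j)
        - hM.1.eigenvalues j * Real.logb 2 d := by
    intro j
    rcases eq_or_lt_of_le (hM.eigenvalues_nonneg j) with h0 | h0
    · rw [← h0]
      simp
    · rw [Real.logb_div (ne_of_gt h0) (Nat.cast_ne_zero.mpr (NeZero.ne d) : (d : ℝ) ≠ 0)]
      ring
  simp_rw [hperj]
  rw [Finset.sum_sub_distrib, ← Finset.sum_mul, sum_eigenvalues_eq_one hM.1 hMtr, one_mul]
  have hSM : vnEntropy M = -∑ j, hM.1.eigenvalues j * Real.logb 2 (hM.1.eigenvalues j) := by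
    rw [vnEntropy, dif_pos hM.1, sum_nlog_eq]
  rw [hSM]
  ring

lemma vnEntropy_mmix_kron {M : Matrix F F ℂ} (hM : M.PosSemidef) (hMtr : M.trace = 1)
    (hd : 0 < d) :
    vnEntropy (mmix (Fin d) ⊗ₖ M) = Real.logb 2 d + vnEntropy M := by
  have hVm : (hM.1.eigenvectorUnitary : Matrix F F ℂ) * (hM.1.eigenvectorUnitary : Matrix F F ℂ)ᴴ = 1 := by
    have := hM.1.eigenvectorUnitary.2
    rwa [Matrix.mem_unitaryGroup_iff, Matrix.star_eq_conjTranspose] at this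
  have hV : (hM.1.eigenvectorUnitary : Matrix F F ℂ)ᴴ * (hM.1.eigenvectorUnitary : Matrix F F ℂ) = 1 :=
    mul_eq_one_comm.mp hVm
  have hW : (((1 : Matrix (Fin d) (Fin d) ℂ) ⊗ₖ (hM.1.eigenvectorUnitary : Matrix F F ℂ)))ᴴ *
      ((1 : Matrix (Fin d) (Fin d) ℂ) ⊗ₖ (hM.1.eigenvectorUnitary : Matrix F F ℂ)) = 1 :=
    one_kron_unitary hV
  rw [vnEntropy_conj hW (mul_eq_one_comm.mp hW) _ (mmix_kron_decomp hM.1)]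
  rw [Fintype.sum_prod_type]
  rw [show (∑ x : Fin d, ∑ y : F, nlog (hM.1.eigenvalues (x, y).2 / d))
      = ∑ _x : Fin d, ∑ y : F, nlog (hM.1.eigenvalues y / d) from rfl]
  rw [Finset.sum_const, Finset.card_univ, Fintype.card_fin, nsmul_eq_mul, Finset.mul_sum]
  have hdR : (0 : ℝ) < (d : ℝ) := by exact_mod_cast hd
  have hperj : ∀ j : F, (d : ℝ) * nlog (hM.1.eigenvalues j / d)
      = nlog (hM.1.eigenvalues j) + hM.1.eigenvalues j * Real.logb 2 d :=
    fun j => nlog_div _ hdR _ (hM.eigenvalues_nonneg j)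
  simp_rw [hperj]
  rw [Finset.sum_add_distrib, ← Finset.sum_mul, sum_eigenvalues_eq_one hM.1 hMtr, one_mul,
    vnEntropy, dif_pos hM.1]
  ring

end Key

section MoreAux
variable {d : ℕ} [NeZero d] {F : Type*} [Fintype F] [DecidableEq F]

lemma kron_mul_split (A B : Matrix (Fin d) (Fin d) ℂ) :
    ((A * B) ⊗ₖ (1 : Matrix F F ℂ))
      = (A ⊗ₖ (1 : Matrix F F ℂ)) * (B ⊗ₖ (1 : Matrix F F ℂ)) := by
  rw [← Matrix.mul_kronecker_mul, Matrix.one_mul]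

lemma diagonal_div_eq_smul {n : Type*} [DecidableEq n] (g : n → ℝ) (c : ℝ) :
    diagonal (fun k => ((g k / c : ℝ) : ℂ))
      = (((c : ℝ) : ℂ))⁻¹ • diagonal (fun k => ((g k : ℝ) : ℂ)) := by
  ext x y
  rcases eq_or_ne x y with h | h
  · subst h
    rw [Matrix.smul_apply, Matrix.diagonal_apply_eq, Matrix.diagonal_apply_eq, smul_eq_mul]
    push_cast
    ring
  · rw [Matrix.smul_apply, Matrix.diagonal_apply_ne _ h, Matrix.diagonal_apply_ne _ h, smul_zero]

lemma ptraceR_blockdiag {ι β : Type*} [Fintype ι] [DecidableEq ι] [Fintype β]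
    (B : ι → Matrix β β ℂ) :
    ptraceR (Matrix.of fun x y : ι × β => if x.1 = y.1 then B x.1 x.2 y.2 else 0)
      = diagonal (fun i => (B i).trace) := by
  ext i i'
  simp only [ptraceR, Matrix.of_apply]
  rcases eq_or_ne i i' with h | h
  · subst h
    rw [Matrix.diagonal_apply_eq]
    simp [Matrix.trace, Matrix.diag]
  · rw [Matrix.diagonal_apply_ne _ h]
    simp [h]

lemma ptraceL_blockdiag {ι β : Type*} [Fintype ι] [DecidableEq ι] [Fintype β]
    (B : ι → Matrix β β ℂ) :
    ptraceL (Matrix.of fun x y : ι × β => if x.1 = y.1 then B x.1 x.2 y.2 else 0)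
      = ∑ i, B i := by
  ext b b'
  rw [Matrix.sum_apply]
  simp [ptraceL]

lemma ptraceL_smul {A B : Type*} [Fintype A] [Fintype B] (c : ℂ)
    (σ : Matrix (A × B) (A × B) ℂ) : ptraceL (c • σ) = c • ptraceL σ := by
  ext b b'
  simp [ptraceL, Finset.mul_sum]

lemma ptraceL_sum {A B ι : Type*} [Fintype A] [Fintype B] [Fintype ι]
    (f : ι → Matrix (A × B) (A × B) ℂ) : ptraceL (∑ i, f i) = ∑ i, ptraceL (f i) := by
  ext b b'
  rw [Matrix.sum_apply]
  simp only [ptraceL, Matrix.of_apply, Matrix.sum_apply]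
  rw [Finset.sum_comm]

lemma mmix_posSemidef {n : Type*} [Fintype n] [DecidableEq n] : (mmix n).PosSemidef := by
  rw [mmix, show ((Fintype.card n : ℂ))⁻¹ = ((((Fintype.card n : ℝ)⁻¹ : ℝ)) : ℂ) by
    push_cast; ring]
  exact posSemidef_real_smul (by positivity) Matrix.PosSemidef.one

lemma mmix_trace {n : Type*} [Fintype n] [DecidableEq n] (h : Fintype.card n ≠ 0) :
    (mmix n).trace = 1 := by
  rw [mmix, Matrix.trace_smul, Matrix.trace_one, smul_eq_mul, inv_mul_cancel₀]
  exact Nat.cast_ne_zero.mpr h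

end MoreAux

section Ensemble
variable {d : ℕ} [NeZero d] {F : Type*} [Fintype F] [DecidableEq F]
variable {ι : Type*} [Fintype ι] [DecidableEq ι]

lemma vnEntropy_blockdiag_conj
    {σ : Matrix (Fin d × F) (Fin d × F) ℂ} (hσ : σ.PosSemidef) (hσtr : σ.trace = 1)
    (U : ι → Matrix (Fin d × F) (Fin d × F) ℂ) (hU : ∀ i, (U i)ᴴ * U i = 1)
    {c : ℝ} (hc : 0 < c) (hcard : ((Fintype.card ι : ℕ) : ℝ) = c)
    (T : Matrix (ι × (Fin d × F)) (ι × (Fin d × F)) ℂ)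
    (hT : T = Matrix.of fun x y : ι × (Fin d × F) =>
      if x.1 = y.1 then ((((c : ℝ) : ℂ))⁻¹ • (U x.1 * σ * (U x.1)ᴴ)) x.2 y.2 else 0) :
    vnEntropy T = vnEntropy σ + Real.logb 2 c := by
  have hUm := hσ.1.eigenvectorUnitary.2
  rw [Matrix.mem_unitaryGroup_iff, Matrix.star_eq_conjTranspose] at hUm
  have hWσ : (hσ.1.eigenvectorUnitary : Matrix (Fin d × F) (Fin d × F) ℂ)ᴴ *
      (hσ.1.eigenvectorUnitary : Matrix (Fin d × F) (Fin d × F) ℂ) = 1 :=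
    mul_eq_one_comm.mp hUm
  have hspec : σ = (hσ.1.eigenvectorUnitary : Matrix (Fin d × F) (Fin d × F) ℂ) *
      diagonal (fun k => ((hσ.1.eigenvalues k : ℝ) : ℂ)) *
      (hσ.1.eigenvectorUnitary : Matrix (Fin d × F) (Fin d × F) ℂ)ᴴ := by
    conv_lhs => rw [hσ.1.spectral_theorem]
    rfl
  have hblock : ∀ i : ι, (((c : ℝ) : ℂ))⁻¹ • (U i * σ * (U i)ᴴ)
      = (U i * (hσ.1.eigenvectorUnitary : Matrix (Fin d × F) (Fin d × F) ℂ)) *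
        diagonal (fun k => ((hσ.1.eigenvalues k / c : ℝ) : ℂ)) *
        ((U i * (hσ.1.eigenvectorUnitary : Matrix (Fin d × F) (Fin d × F) ℂ)))ᴴ := by
    intro i
    rw [diagonal_div_eq_smul, Matrix.conjTranspose_mul, Matrix.mul_smul, Matrix.smul_mul]
    congr 1
    conv_lhs => rw [hspec]
    simp only [Matrix.mul_assoc]
  have hTeq : T = Matrix.of fun x y : ι × (Fin d × F) =>
      if x.1 = y.1 then
        ((U x.1 * (hσ.1.eigenvectorUnitary : Matrix (Fin d × F) (Fin d × F) ℂ)) *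
          diagonal (fun k => ((hσ.1.eigenvalues k / c : ℝ) : ℂ)) *
          ((U x.1 * (hσ.1.eigenvectorUnitary : Matrix (Fin d × F) (Fin d × F) ℂ)))ᴴ) x.2 y.2
      else 0 := by
    rw [hT]
    ext x y
    simp only [Matrix.of_apply]
    rcases eq_or_ne x.1 y.1 with h | h
    · rw [if_pos h, if_pos h, hblock x.1]
    · rw [if_neg h, if_neg h]
  rw [hTeq, vnEntropy_blockdiag _ (fun i => mul_unitary (hU i) hWσ), hcard]
  have hperk : ∀ k, c * nlog (hσ.1.eigenvalues k / c)
      = nlog (hσ.1.eigenvalues k) + hσ.1.eigenvalues k * Real.logb 2 c :=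
    fun k => nlog_div c hc _ (hσ.eigenvalues_nonneg k)
  rw [Finset.mul_sum]
  simp_rw [hperk]
  rw [Finset.sum_add_distrib, ← Finset.sum_mul, sum_eigenvalues_eq_one hσ.1 hσtr, one_mul,
    vnEntropy, dif_pos hσ.1]

lemma marg_blockdiag_conj
    {σ : Matrix (Fin d × F) (Fin d × F) ℂ} (hσtr : σ.trace = 1)
    (U : ι → Matrix (Fin d × F) (Fin d × F) ℂ) (hU : ∀ i, (U i)ᴴ * U i = 1)
    (c : ℝ)
    (T : Matrix (ι × (Fin d × F)) (ι × (Fin d × F)) ℂ)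
    (hT : T = Matrix.of fun x y : ι × (Fin d × F) =>
      if x.1 = y.1 then ((((c : ℝ) : ℂ))⁻¹ • (U x.1 * σ * (U x.1)ᴴ)) x.2 y.2 else 0) :
    ptraceR T = diagonal (fun _ : ι => (((c⁻¹ : ℝ) : ℝ) : ℂ)) ∧
    ptraceL T = (((c : ℝ) : ℂ))⁻¹ • ∑ i, U i * σ * (U i)ᴴ := by
  constructor
  · rw [hT, ptraceR_blockdiag (fun i => (((c : ℝ) : ℂ))⁻¹ • (U i * σ * (U i)ᴴ))]
    have hfn : (fun i : ι => ((((c : ℝ) : ℂ))⁻¹ • (U i * σ * (U i)ᴴ)).trace)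
        = fun _ : ι => (((c⁻¹ : ℝ) : ℝ) : ℂ) := by
      funext i
      rw [Matrix.trace_smul, trace_conj_unitary (hU i), hσtr, smul_eq_mul, mul_one,
        Complex.ofReal_inv]
    rw [hfn]
  · rw [hT, ptraceL_blockdiag (fun i => (((c : ℝ) : ℂ))⁻¹ • (U i * σ * (U i)ᴴ)), ← Finset.smul_sum]

lemma vnEntropy_diag_const_inv {c : ℝ} (hc : 0 < c) (hcard : ((Fintype.card ι : ℕ) : ℝ) = c) :
    vnEntropy (diagonal (fun _ : ι => (((c⁻¹ : ℝ) : ℝ) : ℂ))) = Real.logb 2 c := by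
  rw [vnEntropy_diag_real, Finset.sum_const, Finset.card_univ, nsmul_eq_mul, hcard, nlog,
    Real.logb_inv]
  field_simp

end Ensemble

end S15
end Aux
/-- relative-entropy identities for the dense-coding ensemble state
`Ω = (1/d²) Σ_{a,b} |a⟩⟨a| ⊗ |b⟩⟨b| ⊗ ρ_{ab}`. -/
theorem statement15 {E : Type*} [Fintype E] [DecidableEq E] (d : ℕ) (hd : 0 < d)
    (Λ : CPTPMap (Fin d) E)
    (ρ : Matrix (Fin d × E) (Fin d × E) ℂ) (hρdef : ρ = idTensor Λ (maxEnt (Fin d)))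
    (ρab : Fin d → Fin d → Matrix (Fin d × E) (Fin d × E) ℂ)
    (hρab : ∀ a b, ρab a b =
      ((weylX d ^ (a : ℕ) * weylZ d ^ (b : ℕ)) ⊗ₖ (1 : Matrix E E ℂ)) * ρ *
        ((weylX d ^ (a : ℕ) * weylZ d ^ (b : ℕ)) ⊗ₖ (1 : Matrix E E ℂ))ᴴ)
    (Ω : Matrix ((Fin d × Fin d) × Fin d × E) ((Fin d × Fin d) × Fin d × E) ℂ)
    (hΩ : Ω = Matrix.of fun x y =>
      if x.1 = y.1 then (((d : ℂ) * (d : ℂ)))⁻¹ * ρab x.1.1 x.1.2 x.2 y.2 else 0)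
    (ρ₀ ρ₁ : Matrix (Fin d × E) (Fin d × E) ℂ)
    (hρ₀ : ρ₀ = ((d : ℂ))⁻¹ • ∑ b : Fin d,
      ((weylZ d ^ (b : ℕ)) ⊗ₖ (1 : Matrix E E ℂ)) * ρ *
        ((weylZ d ^ (b : ℕ)) ⊗ₖ (1 : Matrix E E ℂ))ᴴ)
    (hρ₁ : ρ₁ = ((d : ℂ))⁻¹ • ∑ a : Fin d,
      ((weylX d ^ (a : ℕ)) ⊗ₖ (1 : Matrix E E ℂ)) * ρ *
        ((weylX d ^ (a : ℕ)) ⊗ₖ (1 : Matrix E E ℂ))ᴴ) :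
    relEnt ρ (mmix (Fin d) ⊗ₖ Λ.toFun (mmix (Fin d))) = mutualInfo Ω ∧
    relEnt ρ₀ (mmix (Fin d) ⊗ₖ Λ.toFun (mmix (Fin d))) =
      mutualInfo (Matrix.of fun (x y : Fin d × Fin d × E) =>
        ∑ b : Fin d, Ω ((x.1, b), x.2) ((y.1, b), y.2)) ∧
    relEnt ρ₁ (mmix (Fin d) ⊗ₖ Λ.toFun (mmix (Fin d))) =
      mutualInfo (Matrix.of fun (x y : Fin d × Fin d × E) =>
        ∑ a : Fin d, Ω ((a, x.1), x.2) ((a, y.1), y.2)) := by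
  haveI : NeZero d := ⟨hd.ne'⟩
  have hdC : ((d : ℕ) : ℂ) ≠ 0 := S15.hd0
  have hdR : (0 : ℝ) < ((d : ℕ) : ℝ) := by exact_mod_cast hd
  have hdRne : ((d : ℕ) : ℝ) ≠ 0 := ne_of_gt hdR
  have hddR : (0 : ℝ) < ((d : ℕ) : ℝ) * ((d : ℕ) : ℝ) := by positivity
  set L : ℝ := Real.logb 2 d with hLdef
  have hlogdd : Real.logb 2 (((d : ℕ) : ℝ) * ((d : ℕ) : ℝ)) = L + L :=
    Real.logb_mul hdRne hdRne
  have hcard1 : ((Fintype.card (Fin d × Fin d) : ℕ) : ℝ) = ((d : ℕ) : ℝ) * ((d : ℕ) : ℝ) := by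
    push_cast [Fintype.card_prod, Fintype.card_fin]
    ring
  have hcard2 : ((Fintype.card (Fin d) : ℕ) : ℝ) = ((d : ℕ) : ℝ) := by simp
  set M : Matrix E E ℂ := Λ.toFun (mmix (Fin d)) with hMdef
  -- unitarity of the Weyl operators
  have hXu : ∀ a : Fin d, (weylX d ^ (a : ℕ))ᴴ * weylX d ^ (a : ℕ) = 1 :=
    fun a => S15.weylX_pow_unitary _
  have hZu : ∀ b : Fin d, (weylZ d ^ (b : ℕ))ᴴ * weylZ d ^ (b : ℕ) = 1 :=
    fun b => S15.weylZ_pow_unitary _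
  have hXZu : ∀ a b : Fin d, (weylX d ^ (a : ℕ) * weylZ d ^ (b : ℕ))ᴴ *
      (weylX d ^ (a : ℕ) * weylZ d ^ (b : ℕ)) = 1 :=
    fun a b => S15.mul_unitary (hXu a) (hZu b)
  -- basic facts about ρ
  have hρpsd : ρ.PosSemidef := by
    rw [hρdef]
    exact Λ.cp d (maxEnt (Fin d)) S15.maxEnt_posSemidef
  have hρtr : ρ.trace = 1 := by
    rw [hρdef]
    have hidtr : (idTensor Λ (maxEnt (Fin d))).trace = (maxEnt (Fin d)).trace := by
      rw [Matrix.trace, Matrix.trace, Fintype.sum_prod_type, Fintype.sum_prod_type]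
      refine Finset.sum_congr rfl fun a _ => ?_
      calc ∑ b, (idTensor Λ (maxEnt (Fin d))) (a, b) (a, b)
          = (Λ.toFun (Matrix.of fun c c' => maxEnt (Fin d) (a, c) (a, c'))).trace := rfl
        _ = (Matrix.of fun c c' => maxEnt (Fin d) (a, c) (a, c') :
              Matrix (Fin d) (Fin d) ℂ).trace := Λ.tp _
        _ = ∑ c, maxEnt (Fin d) (a, c) (a, c) := rfl
    rw [hidtr, S15.maxEnt_trace (by simpa using hd)]
  have hmargρ : ptraceL ρ = M := by
    rw [hρdef, hMdef]
    ext e e'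
    have hlhs : ptraceL (idTensor Λ (maxEnt (Fin d))) e e'
        = ∑ a : Fin d, Λ.toFun (Matrix.of fun c c' => maxEnt (Fin d) (a, c) (a, c')) e e' := rfl
    rw [hlhs]
    have hsum := map_sum (IsLinearMap.mk' Λ.toFun Λ.lin)
      (fun a : Fin d => (Matrix.of fun c c' => maxEnt (Fin d) (a, c) (a, c') :
        Matrix (Fin d) (Fin d) ℂ)) Finset.univ
    simp only [IsLinearMap.mk'_apply] at hsum
    have hB : (∑ a : Fin d, (Matrix.of fun c c' => maxEnt (Fin d) (a, c) (a, c') :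
        Matrix (Fin d) (Fin d) ℂ)) = mmix (Fin d) := by
      ext c c'
      rw [Matrix.sum_apply]
      simp only [Matrix.of_apply, maxEnt, mmix, Fintype.card_fin, Matrix.smul_apply,
        Matrix.one_apply, smul_eq_mul]
      rcases eq_or_ne c c' with h | h
      · subst h
        simp only [and_self, if_pos rfl, mul_one]
        rw [Finset.sum_ite_eq' Finset.univ c fun _ => ((d : ℕ) : ℂ)⁻¹]
        simp
      · have hno : ∀ a : Fin d, ¬(a = c ∧ a = c') := fun a hx => h (hx.1 ▸ hx.2 ▸ rfl)
        simp [hno, h]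
    rw [show (∑ a : Fin d, Λ.toFun (Matrix.of fun c c' => maxEnt (Fin d) (a, c) (a, c')) e e')
        = (∑ a : Fin d, Λ.toFun (Matrix.of fun c c' => maxEnt (Fin d) (a, c) (a, c'))) e e'
      from (Matrix.sum_apply e e' Finset.univ _).symm, ← hsum, hB]
  have hMpsd : M.PosSemidef := by
    have h1 : ((mmix (Fin d)).submatrix (Prod.snd : Fin 1 × Fin d → Fin d)
        Prod.snd).PosSemidef := S15.mmix_posSemidef.submatrix _
    have h2 := Λ.cp 1 _ h1
    exact h2.submatrix (fun e : E => ((0 : Fin 1), e))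
  have hMtr : M.trace = 1 := by
    rw [hMdef, Λ.tp]
    exact S15.mmix_trace (by simp [hd.ne'])
  -- facts about ρ₀ and ρ₁
  have hconjpsd : ∀ C : Matrix (Fin d) (Fin d) ℂ,
      ((C ⊗ₖ (1 : Matrix E E ℂ)) * ρ * (C ⊗ₖ (1 : Matrix E E ℂ))ᴴ).PosSemidef :=
    fun C => hρpsd.mul_mul_conjTranspose_same _
  have hdinvC : ((d : ℕ) : ℂ)⁻¹ = (((((d : ℕ) : ℝ))⁻¹ : ℝ) : ℂ) := by push_cast; ring
  have hρ₀psd : ρ₀.PosSemidef := by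
    rw [hρ₀, hdinvC]
    exact S15.posSemidef_real_smul (by positivity) (S15.posSemidef_sum _ fun b => hconjpsd _)
  have hρ₁psd : ρ₁.PosSemidef := by
    rw [hρ₁, hdinvC]
    exact S15.posSemidef_real_smul (by positivity) (S15.posSemidef_sum _ fun a => hconjpsd _)
  have htrconj : ∀ C : Matrix (Fin d) (Fin d) ℂ, Cᴴ * C = 1 →
      ((C ⊗ₖ (1 : Matrix E E ℂ)) * ρ * (C ⊗ₖ (1 : Matrix E E ℂ))ᴴ).trace = 1 :=
    fun C hC => by rw [S15.trace_conj_unitary (S15.kron_one_unitary hC), hρtr]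
  have hρ₀tr : ρ₀.trace = 1 := by
    rw [hρ₀, Matrix.trace_smul, Matrix.trace_sum,
      Finset.sum_congr rfl fun b _ => htrconj _ (hZu b), Finset.sum_const, Finset.card_univ,
      Fintype.card_fin, nsmul_eq_mul, mul_one, smul_eq_mul, inv_mul_cancel₀ hdC]
  have hρ₁tr : ρ₁.trace = 1 := by
    rw [hρ₁, Matrix.trace_smul, Matrix.trace_sum,
      Finset.sum_congr rfl fun a _ => htrconj _ (hXu a), Finset.sum_const, Finset.card_univ,
      Fintype.card_fin, nsmul_eq_mul, mul_one, smul_eq_mul, inv_mul_cancel₀ hdC]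
  have hρ₀marg : ptraceL ρ₀ = M := by
    rw [hρ₀, S15.ptraceL_smul, S15.ptraceL_sum,
      Finset.sum_congr rfl fun b _ => by rw [S15.ptraceL_conj _ (hZu b) ρ, hmargρ],
      Finset.sum_const, Finset.card_univ, Fintype.card_fin, ← Nat.cast_smul_eq_nsmul ℂ,
      smul_smul, inv_mul_cancel₀ hdC, one_smul]
  have hρ₁marg : ptraceL ρ₁ = M := by
    rw [hρ₁, S15.ptraceL_smul, S15.ptraceL_sum,
      Finset.sum_congr rfl fun a _ => by rw [S15.ptraceL_conj _ (hXu a) ρ, hmargρ],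
      Finset.sum_const, Finset.card_univ, Fintype.card_fin, ← Nat.cast_smul_eq_nsmul ℂ,
      smul_smul, inv_mul_cancel₀ hdC, one_smul]
  -- the full twirl
  have htwirl : (∑ a : Fin d, ∑ b : Fin d,
      ((weylX d ^ (a : ℕ) * weylZ d ^ (b : ℕ)) ⊗ₖ (1 : Matrix E E ℂ)) * ρ *
        ((weylX d ^ (a : ℕ) * weylZ d ^ (b : ℕ)) ⊗ₖ (1 : Matrix E E ℂ))ᴴ)
      = ((d : ℕ) : ℂ) • ((1 : Matrix (Fin d) (Fin d) ℂ) ⊗ₖ M) := by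
    rw [S15.twirl_kron ρ, hmargρ]
  have hmmixkron : mmix (Fin d) ⊗ₖ M
      = ((d : ℕ) : ℂ)⁻¹ • ((1 : Matrix (Fin d) (Fin d) ℂ) ⊗ₖ M) := by
    rw [mmix, Fintype.card_fin, Matrix.smul_kronecker]
  have hsplitconj : ∀ a b : Fin d,
      ((weylX d ^ (a : ℕ) * weylZ d ^ (b : ℕ)) ⊗ₖ (1 : Matrix E E ℂ)) * ρ *
        ((weylX d ^ (a : ℕ) * weylZ d ^ (b : ℕ)) ⊗ₖ (1 : Matrix E E ℂ))ᴴ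
      = ((weylX d ^ (a : ℕ)) ⊗ₖ (1 : Matrix E E ℂ)) *
          (((weylZ d ^ (b : ℕ)) ⊗ₖ (1 : Matrix E E ℂ)) * ρ *
            ((weylZ d ^ (b : ℕ)) ⊗ₖ (1 : Matrix E E ℂ))ᴴ) *
          ((weylX d ^ (a : ℕ)) ⊗ₖ (1 : Matrix E E ℂ))ᴴ := by
    intro a b
    rw [S15.kron_mul_split, Matrix.conjTranspose_mul]
    simp only [Matrix.mul_assoc]
  have hsumZ : (∑ b : Fin d, ((weylZ d ^ (b : ℕ)) ⊗ₖ (1 : Matrix E E ℂ)) * ρ *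
      ((weylZ d ^ (b : ℕ)) ⊗ₖ (1 : Matrix E E ℂ))ᴴ) = ((d : ℕ) : ℂ) • ρ₀ := by
    rw [hρ₀, smul_smul, mul_inv_cancel₀ hdC, one_smul]
  have hsumX : (∑ a : Fin d, ((weylX d ^ (a : ℕ)) ⊗ₖ (1 : Matrix E E ℂ)) * ρ *
      ((weylX d ^ (a : ℕ)) ⊗ₖ (1 : Matrix E E ℂ))ᴴ) = ((d : ℕ) : ℂ) • ρ₁ := by
    rw [hρ₁, smul_smul, mul_inv_cancel₀ hdC, one_smul]
  have hsumb : ∀ a : Fin d, (∑ b : Fin d, ρab a b)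
      = ((d : ℕ) : ℂ) • (((weylX d ^ (a : ℕ)) ⊗ₖ (1 : Matrix E E ℂ)) * ρ₀ *
          ((weylX d ^ (a : ℕ)) ⊗ₖ (1 : Matrix E E ℂ))ᴴ) := by
    intro a
    calc ∑ b : Fin d, ρab a b
        = ∑ b : Fin d, ((weylX d ^ (a : ℕ)) ⊗ₖ (1 : Matrix E E ℂ)) *
            (((weylZ d ^ (b : ℕ)) ⊗ₖ (1 : Matrix E E ℂ)) * ρ *
              ((weylZ d ^ (b : ℕ)) ⊗ₖ (1 : Matrix E E ℂ))ᴴ) *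
            ((weylX d ^ (a : ℕ)) ⊗ₖ (1 : Matrix E E ℂ))ᴴ :=
          Finset.sum_congr rfl fun b _ => by rw [hρab a b, hsplitconj a b]
      _ = ((weylX d ^ (a : ℕ)) ⊗ₖ (1 : Matrix E E ℂ)) *
            (∑ b : Fin d, ((weylZ d ^ (b : ℕ)) ⊗ₖ (1 : Matrix E E ℂ)) * ρ *
              ((weylZ d ^ (b : ℕ)) ⊗ₖ (1 : Matrix E E ℂ))ᴴ) *
            ((weylX d ^ (a : ℕ)) ⊗ₖ (1 : Matrix E E ℂ))ᴴ := by
          rw [Matrix.mul_sum, Matrix.sum_mul]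
      _ = _ := by rw [hsumZ, Matrix.mul_smul, Matrix.smul_mul]
  have hsuma : ∀ b : Fin d, (∑ a : Fin d, ρab a b)
      = ((d : ℕ) : ℂ) • (((weylZ d ^ (b : ℕ)) ⊗ₖ (1 : Matrix E E ℂ)) * ρ₁ *
          ((weylZ d ^ (b : ℕ)) ⊗ₖ (1 : Matrix E E ℂ))ᴴ) := by
    intro b
    calc ∑ a : Fin d, ρab a b
        = ∑ a : Fin d, ((weylZ d ^ (b : ℕ)) ⊗ₖ (1 : Matrix E E ℂ)) *
            (((weylX d ^ (a : ℕ)) ⊗ₖ (1 : Matrix E E ℂ)) * ρ *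
              ((weylX d ^ (a : ℕ)) ⊗ₖ (1 : Matrix E E ℂ))ᴴ) *
            ((weylZ d ^ (b : ℕ)) ⊗ₖ (1 : Matrix E E ℂ))ᴴ :=
          Finset.sum_congr rfl fun a _ => by rw [hρab a b, S15.comm_conj a b ρ]
      _ = ((weylZ d ^ (b : ℕ)) ⊗ₖ (1 : Matrix E E ℂ)) *
            (∑ a : Fin d, ((weylX d ^ (a : ℕ)) ⊗ₖ (1 : Matrix E E ℂ)) * ρ *
              ((weylX d ^ (a : ℕ)) ⊗ₖ (1 : Matrix E E ℂ))ᴴ) *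
            ((weylZ d ^ (b : ℕ)) ⊗ₖ (1 : Matrix E E ℂ))ᴴ := by
          rw [Matrix.mul_sum, Matrix.sum_mul]
      _ = _ := by rw [hsumX, Matrix.mul_smul, Matrix.smul_mul]
  refine ⟨?_, ?_, ?_⟩
  · -- GOAL 1
    rw [S15.relEnt_key hMpsd hMtr hρpsd hρtr hmargρ]
    have hT1 : Ω = Matrix.of fun x y : (Fin d × Fin d) × (Fin d × E) =>
        if x.1 = y.1 then
          ((((((d : ℕ) : ℝ) * ((d : ℕ) : ℝ) : ℝ)) : ℂ)⁻¹ •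
            ((((weylX d ^ (x.1.1 : ℕ) * weylZ d ^ (x.1.2 : ℕ)) ⊗ₖ (1 : Matrix E E ℂ))) * ρ *
              (((weylX d ^ (x.1.1 : ℕ) * weylZ d ^ (x.1.2 : ℕ)) ⊗ₖ (1 : Matrix E E ℂ)))ᴴ)) x.2 y.2
        else 0 := by
      rw [hΩ]
      ext x y
      simp only [Matrix.of_apply]
      rcases eq_or_ne x.1 y.1 with h | h
      · rw [if_pos h, if_pos h, Matrix.smul_apply, smul_eq_mul, hρab x.1.1 x.1.2]
        congr 1
        push_cast
        ring
      · rw [if_neg h, if_neg h]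
    have hmargs := S15.marg_blockdiag_conj hρtr
      (fun p : Fin d × Fin d =>
        ((weylX d ^ (p.1 : ℕ) * weylZ d ^ (p.2 : ℕ)) ⊗ₖ (1 : Matrix E E ℂ)))
      (fun p => S15.kron_one_unitary (hXZu p.1 p.2)) (((d : ℕ) : ℝ) * ((d : ℕ) : ℝ)) Ω hT1
    have hSR : vnEntropy (ptraceR Ω) = L + L := by
      rw [hmargs.1, S15.vnEntropy_diag_const_inv hddR hcard1, hlogdd]
    have hSL : vnEntropy (ptraceL Ω) = L + vnEntropy M := by
      have hptL : ptraceL Ω = mmix (Fin d) ⊗ₖ M := by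
        rw [hmargs.2, hmmixkron]
        rw [show (∑ p : Fin d × Fin d,
            (((weylX d ^ (p.1 : ℕ) * weylZ d ^ (p.2 : ℕ)) ⊗ₖ (1 : Matrix E E ℂ))) * ρ *
              (((weylX d ^ (p.1 : ℕ) * weylZ d ^ (p.2 : ℕ)) ⊗ₖ (1 : Matrix E E ℂ)))ᴴ)
            = ∑ a : Fin d, ∑ b : Fin d,
              ((weylX d ^ (a : ℕ) * weylZ d ^ (b : ℕ)) ⊗ₖ (1 : Matrix E E ℂ)) * ρ *
                ((weylX d ^ (a : ℕ) * weylZ d ^ (b : ℕ)) ⊗ₖ (1 : Matrix E E ℂ))ᴴ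
          from Fintype.sum_prod_type _, htwirl, smul_smul]
        congr 1
        push_cast
        rw [mul_inv, mul_assoc, inv_mul_cancel₀ hdC, mul_one]
      rw [hptL]
      exact S15.vnEntropy_mmix_kron hMpsd hMtr hd
    have hSΩ : vnEntropy Ω = vnEntropy ρ + (L + L) := by
      rw [S15.vnEntropy_blockdiag_conj hρpsd hρtr _
        (fun p : Fin d × Fin d => S15.kron_one_unitary (hXZu p.1 p.2)) hddR hcard1 Ω hT1,
        hlogdd]
    rw [mutualInfo, hSR, hSL, hSΩ]
    ring
  · -- GOAL 2
    rw [S15.relEnt_key hMpsd hMtr hρ₀psd hρ₀tr hρ₀marg]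
    set Ω₂ : Matrix (Fin d × Fin d × E) (Fin d × Fin d × E) ℂ :=
      Matrix.of fun x y : Fin d × Fin d × E =>
        ∑ b : Fin d, Ω ((x.1, b), x.2) ((y.1, b), y.2) with hΩ₂def
    have hT2 : Ω₂ = Matrix.of fun x y : Fin d × (Fin d × E) =>
        if x.1 = y.1 then
          (((((d : ℕ) : ℝ) : ℝ) : ℂ)⁻¹ •
            (((weylX d ^ (x.1 : ℕ)) ⊗ₖ (1 : Matrix E E ℂ)) * ρ₀ *
              ((weylX d ^ (x.1 : ℕ)) ⊗ₖ (1 : Matrix E E ℂ))ᴴ)) x.2 y.2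
        else 0 := by
      rw [hΩ₂def]
      ext x y
      simp only [Matrix.of_apply, hΩ]
      rcases eq_or_ne x.1 y.1 with h | h
      · have hcond : ∀ b : Fin d, ((x.1, b) : Fin d × Fin d) = (y.1, b) := fun b => by rw [h]
        rw [Finset.sum_congr rfl fun b _ => if_pos (hcond b), if_pos h]
        rw [← Finset.mul_sum]
        rw [show (∑ b : Fin d, ρab x.1 b x.2 y.2) = (∑ b : Fin d, ρab x.1 b) x.2 y.2
          from (Matrix.sum_apply _ _ _ _).symm, hsumb x.1]
        rw [Matrix.smul_apply, Matrix.smul_apply, smul_eq_mul, smul_eq_mul, ← mul_assoc]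
        congr 1
        push_cast
        rw [mul_inv, mul_assoc, inv_mul_cancel₀ hdC, mul_one]
      · have hcond : ∀ b : Fin d, ((x.1, b) : Fin d × Fin d) ≠ (y.1, b) :=
          fun b hc => h (Prod.ext_iff.mp hc).1
        rw [Finset.sum_congr rfl fun b _ => if_neg (hcond b), if_neg h, Finset.sum_const_zero]
    have hmargs := S15.marg_blockdiag_conj hρ₀tr
      (fun a : Fin d => ((weylX d ^ (a : ℕ)) ⊗ₖ (1 : Matrix E E ℂ)))
      (fun a => S15.kron_one_unitary (hXu a)) ((d : ℕ) : ℝ) Ω₂ hT2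
    have hSR : vnEntropy (ptraceR Ω₂) = L := by
      rw [hmargs.1, S15.vnEntropy_diag_const_inv hdR hcard2]
    have hSL : vnEntropy (ptraceL Ω₂) = L + vnEntropy M := by
      have hXtw : (∑ a : Fin d, ((weylX d ^ (a : ℕ)) ⊗ₖ (1 : Matrix E E ℂ)) * ρ₀ *
          ((weylX d ^ (a : ℕ)) ⊗ₖ (1 : Matrix E E ℂ))ᴴ)
          = (1 : Matrix (Fin d) (Fin d) ℂ) ⊗ₖ M := by
        have hXa : ∀ a : Fin d, ((weylX d ^ (a : ℕ)) ⊗ₖ (1 : Matrix E E ℂ)) * ρ₀ *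
            ((weylX d ^ (a : ℕ)) ⊗ₖ (1 : Matrix E E ℂ))ᴴ
            = ((d : ℕ) : ℂ)⁻¹ • ∑ b : Fin d, ρab a b := by
          intro a
          rw [hsumb a, smul_smul, inv_mul_cancel₀ hdC, one_smul]
        calc ∑ a : Fin d, ((weylX d ^ (a : ℕ)) ⊗ₖ (1 : Matrix E E ℂ)) * ρ₀ *
              ((weylX d ^ (a : ℕ)) ⊗ₖ (1 : Matrix E E ℂ))ᴴ
            = ∑ a : Fin d, ((d : ℕ) : ℂ)⁻¹ • ∑ b : Fin d, ρab a b :=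
              Finset.sum_congr rfl fun a _ => hXa a
          _ = ((d : ℕ) : ℂ)⁻¹ • ∑ a : Fin d, ∑ b : Fin d, ρab a b := by
              rw [Finset.smul_sum]
          _ = ((d : ℕ) : ℂ)⁻¹ • ∑ a : Fin d, ∑ b : Fin d,
                ((weylX d ^ (a : ℕ) * weylZ d ^ (b : ℕ)) ⊗ₖ (1 : Matrix E E ℂ)) * ρ *
                  ((weylX d ^ (a : ℕ) * weylZ d ^ (b : ℕ)) ⊗ₖ (1 : Matrix E E ℂ))ᴴ := by
              rw [Finset.sum_congr rfl fun a _ => Finset.sum_congr rfl fun b _ => hρab a b]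
          _ = ((d : ℕ) : ℂ)⁻¹ • (((d : ℕ) : ℂ) • ((1 : Matrix (Fin d) (Fin d) ℂ) ⊗ₖ M)) := by
              rw [htwirl]
          _ = _ := by rw [smul_smul, inv_mul_cancel₀ hdC, one_smul]
      rw [hmargs.2, hXtw, show ((((d : ℕ) : ℝ) : ℝ) : ℂ)⁻¹ = ((d : ℕ) : ℂ)⁻¹ by push_cast; ring,
        ← hmmixkron]
      exact S15.vnEntropy_mmix_kron hMpsd hMtr hd
    have hSΩ : vnEntropy Ω₂ = vnEntropy ρ₀ + L := by
      rw [S15.vnEntropy_blockdiag_conj hρ₀psd hρ₀tr _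
        (fun a : Fin d => S15.kron_one_unitary (hXu a)) hdR hcard2 Ω₂ hT2]
    rw [mutualInfo, hSR, hSL, hSΩ]
    ring
  · -- GOAL 3
    rw [S15.relEnt_key hMpsd hMtr hρ₁psd hρ₁tr hρ₁marg]
    set Ω₃ : Matrix (Fin d × Fin d × E) (Fin d × Fin d × E) ℂ :=
      Matrix.of fun x y : Fin d × Fin d × E =>
        ∑ a : Fin d, Ω ((a, x.1), x.2) ((a, y.1), y.2) with hΩ₃def
    have hT3 : Ω₃ = Matrix.of fun x y : Fin d × (Fin d × E) =>
        if x.1 = y.1 then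
          (((((d : ℕ) : ℝ) : ℝ) : ℂ)⁻¹ •
            (((weylZ d ^ (x.1 : ℕ)) ⊗ₖ (1 : Matrix E E ℂ)) * ρ₁ *
              ((weylZ d ^ (x.1 : ℕ)) ⊗ₖ (1 : Matrix E E ℂ))ᴴ)) x.2 y.2
        else 0 := by
      rw [hΩ₃def]
      ext x y
      simp only [Matrix.of_apply, hΩ]
      rcases eq_or_ne x.1 y.1 with h | h
      · have hcond : ∀ a : Fin d, ((a, x.1) : Fin d × Fin d) = (a, y.1) := fun a => by rw [h]
        rw [Finset.sum_congr rfl fun a _ => if_pos (hcond a), if_pos h]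
        rw [← Finset.mul_sum]
        rw [show (∑ a : Fin d, ρab a x.1 x.2 y.2) = (∑ a : Fin d, ρab a x.1) x.2 y.2
          from (Matrix.sum_apply _ _ _ _).symm, hsuma x.1]
        rw [Matrix.smul_apply, Matrix.smul_apply, smul_eq_mul, smul_eq_mul, ← mul_assoc]
        congr 1
        push_cast
        rw [mul_inv, mul_assoc, inv_mul_cancel₀ hdC, mul_one]
      · have hcond : ∀ a : Fin d, ((a, x.1) : Fin d × Fin d) ≠ (a, y.1) :=
          fun a hc => h (Prod.ext_iff.mp hc).2
        rw [Finset.sum_congr rfl fun a _ => if_neg (hcond a), if_neg h, Finset.sum_const_zero]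
    have hmargs := S15.marg_blockdiag_conj hρ₁tr
      (fun b : Fin d => ((weylZ d ^ (b : ℕ)) ⊗ₖ (1 : Matrix E E ℂ)))
      (fun b => S15.kron_one_unitary (hZu b)) ((d : ℕ) : ℝ) Ω₃ hT3
    have hSR : vnEntropy (ptraceR Ω₃) = L := by
      rw [hmargs.1, S15.vnEntropy_diag_const_inv hdR hcard2]
    have hSL : vnEntropy (ptraceL Ω₃) = L + vnEntropy M := by
      have hZtw : (∑ b : Fin d, ((weylZ d ^ (b : ℕ)) ⊗ₖ (1 : Matrix E E ℂ)) * ρ₁ *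
          ((weylZ d ^ (b : ℕ)) ⊗ₖ (1 : Matrix E E ℂ))ᴴ)
          = (1 : Matrix (Fin d) (Fin d) ℂ) ⊗ₖ M := by
        have hZb : ∀ b : Fin d, ((weylZ d ^ (b : ℕ)) ⊗ₖ (1 : Matrix E E ℂ)) * ρ₁ *
            ((weylZ d ^ (b : ℕ)) ⊗ₖ (1 : Matrix E E ℂ))ᴴ
            = ((d : ℕ) : ℂ)⁻¹ • ∑ a : Fin d, ρab a b := by
          intro b
          rw [hsuma b, smul_smul, inv_mul_cancel₀ hdC, one_smul]
        calc ∑ b : Fin d, ((weylZ d ^ (b : ℕ)) ⊗ₖ (1 : Matrix E E ℂ)) * ρ₁ *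
              ((weylZ d ^ (b : ℕ)) ⊗ₖ (1 : Matrix E E ℂ))ᴴ
            = ∑ b : Fin d, ((d : ℕ) : ℂ)⁻¹ • ∑ a : Fin d, ρab a b :=
              Finset.sum_congr rfl fun b _ => hZb b
          _ = ((d : ℕ) : ℂ)⁻¹ • ∑ b : Fin d, ∑ a : Fin d, ρab a b := by
              rw [Finset.smul_sum]
          _ = ((d : ℕ) : ℂ)⁻¹ • ∑ a : Fin d, ∑ b : Fin d, ρab a b := by
              rw [Finset.sum_comm]
          _ = ((d : ℕ) : ℂ)⁻¹ • ∑ a : Fin d, ∑ b : Fin d,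
                ((weylX d ^ (a : ℕ) * weylZ d ^ (b : ℕ)) ⊗ₖ (1 : Matrix E E ℂ)) * ρ *
                  ((weylX d ^ (a : ℕ) * weylZ d ^ (b : ℕ)) ⊗ₖ (1 : Matrix E E ℂ))ᴴ := by
              rw [Finset.sum_congr rfl fun a _ => Finset.sum_congr rfl fun b _ => hρab a b]
          _ = ((d : ℕ) : ℂ)⁻¹ • (((d : ℕ) : ℂ) • ((1 : Matrix (Fin d) (Fin d) ℂ) ⊗ₖ M)) := by
              rw [htwirl]
          _ = _ := by rw [smul_smul, inv_mul_cancel₀ hdC, one_smul]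
      rw [hmargs.2, hZtw, show ((((d : ℕ) : ℝ) : ℝ) : ℂ)⁻¹ = ((d : ℕ) : ℂ)⁻¹ by push_cast; ring,
        ← hmmixkron]
      exact S15.vnEntropy_mmix_kron hMpsd hMtr hd
    have hSΩ : vnEntropy Ω₃ = vnEntropy ρ₁ + L := by
      rw [S15.vnEntropy_blockdiag_conj hρ₁psd hρ₁tr _
        (fun b : Fin d => S15.kron_one_unitary (hZu b)) hdR hcard2 Ω₃ hT3]
    rw [mutualInfo, hSR, hSL, hSΩ]
    ring

end
end

section
/- For the flower state ρ^{AA'BB'} with purification (1/√(2d)) Σ_{i,j} |i⟩^A|j⟩^{A'}|i⟩^B|j⟩^{B'}U_j|i⟩^C, and any CPTP map Λ: C → E with resulting extension ρ^{AA'BB'E}, the entropies satisfy S(ρ^{AA'E}) = S(ρ^{BB'E}) = 1 + S(τ) + S(Λ(τ)) − (1/2)χ(Λ(E₀)) − (1/2)χ(Λ(E₁)), S(ρ^E) = S(Λ(τ)), and S(ρ^{AA'BB'E}) = S((id ⊗ Λ)Φ_d), where τ = I/d. -/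
open scoped Matrix Kronecker BigOperators ComplexOrder
open Matrix

noncomputable section

variable {A B C E : Type*}

/-!
Write `u_{(i,j)} = U_j|i⟩`. The purification is `(V ⊗ 1)|Φ_d⟩` for the isometry
`V|c⟩ = 2^{-1/2} Σ_k ⟨c|u_k⟩ |k⟩^{AA'}|k⟩^{BB'}`, so `ρ^{AA'BB'E}` is an isometric conjugate of
`(id ⊗ Λ)Φ_d` and has the same entropy. Tracing out `BB'` leaves `AA'C` block diagonal in the
label `k`, with blocks `(2d)⁻¹|u_k⟩⟨u_k|`; as `Λ` acts on `C` alone, `ρ^{AA'E}` is block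
diagonal with blocks `(2d)⁻¹Λ(|u_k⟩⟨u_k|)`, and the block entropies add up to
`1 + log d + (2d)⁻¹ Σ_k S(Λ(|u_k⟩⟨u_k|))`. Since `U₀` and `U₁` are unitary, both ensembles
`E_j` average to `τ`, which turns this sum into the two Holevo quantities; the same fact gives
`ρ^C = τ`. The state is symmetric under `AA' ↔ BB'`.
-/

lemma nlog_zero : nlog 0 = 0 := by simp [nlog]

lemma nlog_mul (a b : ℝ) : nlog (a * b) = b * nlog a + a * nlog b := by
  rcases eq_or_ne a 0 with rfl | ha
  · simp [nlog]
  rcases eq_or_ne b 0 with rfl | hb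
  · simp [nlog]
  simp only [nlog, Real.logb_mul ha hb]
  ring

lemma mul_nlog_inv (x : ℝ) : x * nlog x⁻¹ = Real.logb 2 x := by
  rcases eq_or_ne x 0 with rfl | hx
  · simp
  rw [nlog, Real.logb_inv]
  field_simp

lemma ofReal_sqrt_inv_mul_self {x : ℝ} (hx : 0 ≤ x) :
    ((Real.sqrt x : ℝ) : ℂ)⁻¹ * ((Real.sqrt x : ℝ) : ℂ)⁻¹ = (x : ℂ)⁻¹ := by
  rw [← mul_inv, ← Complex.ofReal_mul, Real.mul_self_sqrt hx]

section Entropy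

open Polynomial

variable {n m ι : Type*} [Fintype n] [DecidableEq n] [Fintype m] [DecidableEq m]

lemma vnEntropy_eq_sum_roots {ρ : Matrix n n ℂ} (hρ : ρ.IsHermitian) :
    vnEntropy ρ = (ρ.charpoly.roots.map fun z => nlog z.re).sum := by
  rw [vnEntropy, dif_pos hρ, hρ.roots_charpoly_eq_eigenvalues, Multiset.map_map]
  simp [Finset.sum_map_val]

lemma vnEntropy_reindex {ρ : Matrix n n ℂ} (hρ : ρ.IsHermitian) (e : n ≃ m) :
    vnEntropy (reindex e e ρ) = vnEntropy ρ := by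
  have hρe : (reindex e e ρ).IsHermitian := hρ.submatrix e.symm
  rw [vnEntropy_eq_sum_roots hρe, charpoly_reindex, vnEntropy_eq_sum_roots hρ]

lemma vnEntropy_diagonal (v : n → ℝ) :
    vnEntropy (diagonal fun i => (v i : ℂ)) = ∑ i, nlog (v i) := by
  have hH : (diagonal fun i => (v i : ℂ)).IsHermitian :=
    isHermitian_diagonal_of_self_adjoint _ (funext fun i => Complex.conj_ofReal (v i))
  rw [vnEntropy_eq_sum_roots hH, charpoly_diagonal, roots_prod _ _ (by
    simp [Finset.prod_ne_zero_iff, X_sub_C_ne_zero])]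
  simp [Finset.sum_map_val]

lemma vnEntropy_mmix : vnEntropy (mmix n) = Real.logb 2 (Fintype.card n) := by
  have h : mmix n = diagonal fun _ => (((Fintype.card n : ℝ)⁻¹ : ℝ) : ℂ) := by
    rw [mmix, smul_one_eq_diagonal]
    simp
  rw [h, vnEntropy_diagonal, Finset.sum_const, Finset.card_univ, nsmul_eq_mul, mul_nlog_inv]

/-- The nonzero spectrum is unchanged, and extra zero eigenvalues contribute `nlog 0 = 0`. -/
lemma vnEntropy_conj_isometry {V : Matrix m n ℂ} (hV : Vᴴ * V = 1) {N : Matrix n n ℂ}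
    (hN : N.IsHermitian) : vnEntropy (V * N * Vᴴ) = vnEntropy N := by
  have hcp := charpoly_mul_comm' V (N * Vᴴ)
  rw [Matrix.mul_assoc N, hV, Matrix.mul_one, ← Matrix.mul_assoc] at hcp
  have hroots := congrArg Polynomial.roots hcp
  rw [roots_mul ((monic_X_pow _).mul (charpoly_monic _)).ne_zero,
    roots_mul ((monic_X_pow _).mul (charpoly_monic _)).ne_zero, roots_X_pow, roots_X_pow] at hroots
  have hsum := congrArg (fun s => (s.map fun z => nlog z.re).sum) hroots
  simp only [Multiset.map_add, Multiset.sum_add, Multiset.map_nsmul, Multiset.sum_nsmul,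
    Multiset.map_singleton, Multiset.sum_singleton, Complex.zero_re, nlog_zero, smul_zero,
    zero_add] at hsum
  rw [vnEntropy_eq_sum_roots (isHermitian_mul_mul_conjTranspose V hN), vnEntropy_eq_sum_roots hN]
  exact hsum

lemma charpoly_blockDiagonal {R : Type*} [CommRing R] [Fintype ι] [DecidableEq ι]
    (M : ι → Matrix n n R) : (blockDiagonal M).charpoly = ∏ k, (M k).charpoly := by
  simp only [charpoly, ← det_blockDiagonal]
  congr 1
  ext ⟨a, k⟩ ⟨b, k'⟩
  by_cases hk : k = k'
  · subst hk
    by_cases hab : a = b <;> simp [blockDiagonal_apply, hab]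
  · simp [blockDiagonal_apply, hk]

lemma vnEntropy_blockDiagonal [Fintype ι] [DecidableEq ι] {M : ι → Matrix n n ℂ}
    (hM : ∀ k, (M k).IsHermitian) : vnEntropy (blockDiagonal M) = ∑ k, vnEntropy (M k) := by
  rw [vnEntropy_eq_sum_roots (isHermitian_blockDiagonal_iff.mpr hM), charpoly_blockDiagonal,
    roots_prod _ _ (Finset.prod_ne_zero_iff.mpr fun k _ => (charpoly_monic _).ne_zero),
    Multiset.map_bind, Multiset.sum_bind, ← Finset.sum_map_val]
  exact Finset.sum_congr rfl fun k _ => (vnEntropy_eq_sum_roots (hM k)).symm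

lemma vnEntropy_real_smul {ρ : Matrix n n ℂ} (hρ : ρ.IsHermitian) (c : ℝ) :
    vnEntropy ((c : ℂ) • ρ) = c * vnEntropy ρ + nlog c * ρ.trace.re := by
  set U : Matrix n n ℂ := (hρ.eigenvectorUnitary : Matrix n n ℂ)
  have hU : Uᴴ * U = 1 := (mem_unitaryGroup_iff').mp hρ.eigenvectorUnitary.2
  have hdiag : (c : ℂ) • ρ = U * diagonal (fun i => ((c * hρ.eigenvalues i : ℝ) : ℂ)) * Uᴴ := by
    have hcD : diagonal (fun i => ((c * hρ.eigenvalues i : ℝ) : ℂ))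
        = (c : ℂ) • diagonal (RCLike.ofReal ∘ hρ.eigenvalues) := by
      ext i j
      by_cases h : i = j <;> simp [h]
    conv_lhs => rw [hρ.spectral_theorem, Unitary.conjStarAlgAut_apply]
    rw [hcD, Matrix.mul_smul, Matrix.smul_mul]
    rfl
  rw [hdiag, vnEntropy_conj_isometry hU (isHermitian_diagonal_of_self_adjoint _
      (funext fun i => Complex.conj_ofReal _)), vnEntropy_diagonal,
    hρ.trace_eq_sum_eigenvalues, vnEntropy, dif_pos hρ]
  simp only [nlog_mul, Finset.sum_add_distrib, ← Finset.mul_sum, ← Finset.sum_mul,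
    ← RCLike.re_to_complex, map_sum, RCLike.ofReal_re]
  ring

end Entropy

section MatrixFacts

variable {n : Type*}

lemma sum_ketbra_col_eq_one [Fintype n] [DecidableEq n] {W : Matrix n n ℂ}
    (hW : W ∈ unitaryGroup n ℂ) : ∑ i, ketbra (fun a => W a i) = 1 := by
  rw [← mem_unitaryGroup_iff.mp hW]
  ext a b
  simp [ketbra, Matrix.sum_apply, mul_apply]

lemma trace_ketbra_col [Fintype n] [DecidableEq n] {W : Matrix n n ℂ}
    (hW : W ∈ unitaryGroup n ℂ) (i : n) :
    (ketbra fun a => W a i).trace = 1 := by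
  have h := congrFun₂ (mem_unitaryGroup_iff'.mp hW) i i
  simp only [mul_apply, star_apply, one_apply_eq] at h
  rw [← h]
  simp [ketbra, trace, mul_comm]

lemma basisVec_eq_col_one [DecidableEq n] (i : n) : basisVec i = fun a => (1 : Matrix n n ℂ) a i :=
  funext fun a => (Matrix.one_apply (i := a) (j := i)).symm

lemma ketbra_mulVec [Fintype n] {m : Type*} (M : Matrix m n ℂ) (v : n → ℂ) :
    ketbra (M *ᵥ v) = M * ketbra v * Mᴴ := by
  change vecMulVec (M *ᵥ v) (star (M *ᵥ v)) = M * vecMulVec v (star v) * Mᴴ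
  rw [mul_vecMulVec, vecMulVec_mul, star_mulVec]

def maxEntKet (n : Type*) [Fintype n] [DecidableEq n] : n × n → ℂ :=
  fun x => if x.1 = x.2 then ((Real.sqrt (Fintype.card n) : ℝ) : ℂ)⁻¹ else 0

lemma maxEnt_eq_ketbra (n : Type*) [Fintype n] [DecidableEq n] :
    maxEnt n = ketbra (maxEntKet n) := by
  ext x y
  have h := ofReal_sqrt_inv_mul_self (Nat.cast_nonneg (α := ℝ) (Fintype.card n))
  push_cast at h
  by_cases hx : x.1 = x.2 <;> by_cases hy : y.1 = y.2 <;>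
    simp [maxEnt, ketbra, maxEntKet, hx, hy, h]

lemma kronecker_one_conjTranspose_mul [DecidableEq n] {m : Type*} [Fintype m] [Fintype A]
    [DecidableEq A] {V : Matrix m n ℂ} (hV : Vᴴ * V = 1) :
    (V ⊗ₖ (1 : Matrix A A ℂ))ᴴ * (V ⊗ₖ (1 : Matrix A A ℂ)) = 1 := by
  rw [conjTranspose_kronecker, ← mul_kronecker_mul, hV, conjTranspose_one, Matrix.one_mul,
    one_kronecker_one]

lemma kronecker_one_conj_apply [Fintype n] {m : Type*} [Fintype A] [DecidableEq A]
    (V : Matrix m n ℂ) (ρ : Matrix (n × A) (n × A) ℂ) (p q : m) (a a' : A) :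
    ((V ⊗ₖ (1 : Matrix A A ℂ)) * ρ * (V ⊗ₖ (1 : Matrix A A ℂ))ᴴ) (p, a) (q, a') =
      ∑ x, ∑ y, V p x * star (V q y) * ρ (x, a) (y, a') := by
  have hleft : ∀ z, ((V ⊗ₖ (1 : Matrix A A ℂ)) * ρ) (p, a) z = ∑ x, V p x * ρ (x, a) z := by
    intro z
    simp [mul_apply, Fintype.sum_prod_type, one_apply]
  have hright : ∀ M : Matrix (m × A) (n × A) ℂ,
      (M * (V ⊗ₖ (1 : Matrix A A ℂ))ᴴ) (p, a) (q, a') = ∑ y, M (p, a) (y, a') * star (V q y) := by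
    intro M
    simp [mul_apply, Fintype.sum_prod_type, one_apply, apply_ite (starRingEnd ℂ)]
  rw [hright, Finset.sum_comm]
  simp only [hleft, Finset.sum_mul]
  exact Finset.sum_congr rfl fun x _ => Finset.sum_congr rfl fun y _ => by ring

lemma ptraceL_margAE [Fintype n] {X Y : Type*} [Fintype X] [Fintype Y]
    (ρ : Matrix ((X × Y) × n) ((X × Y) × n) ℂ) : ptraceL (margAE ρ) = ptraceL ρ := by
  ext c c'
  simp [ptraceL, margAE, Fintype.sum_prod_type]

lemma ptraceL_reindex_blockDiagonal [Fintype n] {ι : Type*} [Fintype ι] [DecidableEq ι]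
    (M : ι → Matrix n n ℂ) :
    ptraceL (reindex (Equiv.prodComm n ι) (Equiv.prodComm n ι) (blockDiagonal M)) = ∑ k, M k := by
  ext c c'
  simp [ptraceL, blockDiagonal_apply, Matrix.sum_apply]

end MatrixFacts

namespace CPTPMap

variable [Fintype A] [DecidableEq A] [Fintype B] [DecidableEq B] (Λ : CPTPMap A B)

def toLinearMap : Matrix A A ℂ →ₗ[ℂ] Matrix B B ℂ := IsLinearMap.mk' Λ.toFun Λ.lin

lemma toFun_zero : Λ.toFun 0 = 0 := Λ.lin.map_zero

lemma toFun_smul (c : ℂ) (M : Matrix A A ℂ) : Λ.toFun (c • M) = c • Λ.toFun M :=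
  Λ.lin.map_smul c M

lemma toFun_sum {ι : Type*} (s : Finset ι) (M : ι → Matrix A A ℂ) :
    Λ.toFun (∑ i ∈ s, M i) = ∑ i ∈ s, Λ.toFun (M i) :=
  map_sum Λ.toLinearMap M s

lemma toFun_sum_apply {ι : Type*} (s : Finset ι) (M : ι → Matrix A A ℂ) (b b' : B) :
    Λ.toFun (∑ i ∈ s, M i) b b' = ∑ i ∈ s, Λ.toFun (M i) b b' := by
  rw [Λ.toFun_sum, Matrix.sum_apply]

lemma posSemidef_idTensor {G : Type*} [Fintype G] {ρ : Matrix (G × A) (G × A) ℂ}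
    (hρ : ρ.PosSemidef) : (idTensor Λ ρ).PosSemidef := by
  let e := Fintype.equivFin G
  have h := (Λ.cp _ _ (hρ.submatrix (Prod.map e.symm id))).submatrix (Prod.map e id)
  convert h using 1
  ext x y
  simp [idTensor]

lemma posSemidef_toFun {ρ : Matrix A A ℂ} (hρ : ρ.PosSemidef) : (Λ.toFun ρ).PosSemidef :=
  (Λ.posSemidef_idTensor (G := Unit) (hρ.submatrix Prod.snd)).submatrix (Prod.mk ())

section PartialTrace

variable {X Y : Type*} [Fintype X] [Fintype Y]

lemma margAE_idTensor (ρ : Matrix ((X × Y) × A) ((X × Y) × A) ℂ) :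
    margAE (idTensor Λ ρ) = idTensor Λ (margAE ρ) := by
  ext x y
  simp only [margAE, idTensor, of_apply]
  rw [← Λ.toFun_sum_apply]
  congr 2
  ext a a'
  simp [Matrix.sum_apply]

lemma margBE_idTensor (ρ : Matrix ((X × Y) × A) ((X × Y) × A) ℂ) :
    margBE (idTensor Λ ρ) = idTensor Λ (margBE ρ) := by
  ext x y
  simp only [margBE, idTensor, of_apply]
  rw [← Λ.toFun_sum_apply]
  congr 2
  ext a a'
  simp [Matrix.sum_apply]

lemma ptraceL_idTensor (ρ : Matrix (X × A) (X × A) ℂ) :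
    ptraceL (idTensor Λ ρ) = Λ.toFun (ptraceL ρ) := by
  ext b b'
  simp only [ptraceL, idTensor, of_apply]
  rw [← Λ.toFun_sum_apply]
  congr 2
  ext a a'
  simp [Matrix.sum_apply]

end PartialTrace

lemma idTensor_reindex_blockDiagonal {ι : Type*} [Fintype ι] [DecidableEq ι]
    (M : ι → Matrix A A ℂ) :
    idTensor Λ (reindex (Equiv.prodComm A ι) (Equiv.prodComm A ι) (blockDiagonal M)) =
      reindex (Equiv.prodComm B ι) (Equiv.prodComm B ι) (blockDiagonal fun k => Λ.toFun (M k)) := by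
  ext ⟨k, b⟩ ⟨k', b'⟩
  by_cases hk : k = k'
  · subst hk
    simp [idTensor, blockDiagonal_apply]
    rfl
  · simp only [idTensor, reindex_apply, submatrix_apply, of_apply, Equiv.prodComm_symm,
      Equiv.prodComm_apply, Prod.swap_prod_mk, blockDiagonal_apply, hk, if_false]
    exact congrFun₂ Λ.toFun_zero b b'

lemma idTensor_kronecker_conj {m n : Type*} [Fintype n] (V : Matrix m n ℂ)
    (ρ : Matrix (n × A) (n × A) ℂ) :
    idTensor Λ ((V ⊗ₖ (1 : Matrix A A ℂ)) * ρ * (V ⊗ₖ (1 : Matrix A A ℂ))ᴴ) =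
      (V ⊗ₖ (1 : Matrix B B ℂ)) * idTensor Λ ρ * (V ⊗ₖ (1 : Matrix B B ℂ))ᴴ := by
  ext ⟨p, b⟩ ⟨q, b'⟩
  have hblock : (Matrix.of fun a a' =>
      ((V ⊗ₖ (1 : Matrix A A ℂ)) * ρ * (V ⊗ₖ (1 : Matrix A A ℂ))ᴴ) (p, a) (q, a')) =
      ∑ x, ∑ y, (V p x * star (V q y)) • Matrix.of fun a a' => ρ (x, a) (y, a') := by
    ext a a'
    simp [kronecker_one_conj_apply, Matrix.sum_apply, mul_assoc]
  rw [kronecker_one_conj_apply]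
  simp only [idTensor, of_apply, hblock, Λ.toFun_sum_apply, Λ.toFun_smul, Matrix.smul_apply,
    smul_eq_mul]

lemma holevoUnif_toFun_ketbra_col {W : Matrix A A ℂ} (hW : W ∈ unitaryGroup A ℂ) :
    holevoUnif (fun i => Λ.toFun (ketbra fun a => W a i)) =
      vnEntropy (Λ.toFun (mmix A)) -
        (Fintype.card A : ℝ)⁻¹ * ∑ i, vnEntropy (Λ.toFun (ketbra fun a => W a i)) := by
  rw [holevoUnif, ← Λ.toFun_sum, sum_ketbra_col_eq_one hW, ← Λ.toFun_smul]
  rfl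

end CPTPMap

lemma sum_pow_eq_ite_of_pow_eq_one {x : ℂ} {d : ℕ} (hx : x ^ d = 1) :
    ∑ i ∈ Finset.range d, x ^ i = if x = 1 then (d : ℂ) else 0 := by
  split_ifs with h
  · simp [h]
  · rw [geom_sum_eq h, hx, sub_self, zero_div]

lemma fourierMat_mul_conjTranspose {d : ℕ} (hd : 0 < d) : fourierMat d * (fourierMat d)ᴴ = 1 := by
  set ζ : ℂ := Complex.exp (2 * Real.pi * Complex.I / d)
  have hζ : IsPrimitiveRoot ζ d := Complex.isPrimitiveRoot_exp d hd.ne'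
  have hF : ∀ j k : Fin d, fourierMat d j k = ζ ^ ((j : ℕ) * k) / (Real.sqrt d : ℂ) := by
    intro j k
    rw [fourierMat, of_apply, ← Complex.exp_nat_mul]
    congr 2
    push_cast
    ring
  have hsqrt : (Real.sqrt d : ℂ) * (Real.sqrt d : ℂ) = d := by
    rw [← Complex.ofReal_mul, Real.mul_self_sqrt (Nat.cast_nonneg d), Complex.ofReal_natCast]
  have hstar : ∀ k : ℕ, star (ζ ^ k) = (ζ ^ k)⁻¹ := fun k =>
    (Complex.inv_eq_conj (by rw [norm_pow, hζ.norm'_eq_one hd.ne', one_pow])).symm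
  ext c c'
  have hterm : ∀ i : Fin d, fourierMat d c i * star (fourierMat d c' i) =
      (ζ ^ (c : ℕ) / ζ ^ (c' : ℕ)) ^ (i : ℕ) / d := by
    intro i
    rw [hF, hF, star_div₀, hstar, ← hsqrt, div_pow, ← pow_mul, ← pow_mul, mul_comm (c : ℕ),
      mul_comm (c' : ℕ)]
    simp only [Complex.star_def, Complex.conj_ofReal]
    field_simp
  have hpow : (ζ ^ (c : ℕ) / ζ ^ (c' : ℕ)) ^ d = 1 := by
    rw [div_pow, ← pow_mul, ← pow_mul, mul_comm, pow_mul, hζ.pow_eq_one, one_pow, mul_comm,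
      pow_mul, hζ.pow_eq_one, one_pow, div_one]
  have hone : ζ ^ (c : ℕ) / ζ ^ (c' : ℕ) = 1 ↔ c = c' := by
    rw [div_eq_one_iff_eq (pow_ne_zero _ (hζ.ne_zero hd.ne'))]
    exact ⟨fun h => Fin.ext (hζ.pow_inj c.isLt c'.isLt h), fun h => h ▸ rfl⟩
  simp only [mul_apply, conjTranspose_apply]
  rw [Finset.sum_congr rfl fun i _ => hterm i, ← Finset.sum_div,
    Fin.sum_univ_eq_sum_range (fun i => (ζ ^ (c : ℕ) / ζ ^ (c' : ℕ)) ^ i),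
    sum_pow_eq_ite_of_pow_eq_one hpow, one_apply]
  simp only [hone]
  split_ifs
  · exact div_self (Nat.cast_ne_zero.mpr hd.ne')
  · exact zero_div _

lemma fourierMat_mem_unitaryGroup {d : ℕ} (hd : 0 < d) : fourierMat d ∈ unitaryGroup (Fin d) ℂ :=
  mem_unitaryGroup_iff.mpr (fourierMat_mul_conjTranspose hd)

def flowerUnitary (d : ℕ) (j : Fin 2) : Matrix (Fin d) (Fin d) ℂ :=
  if j = 0 then 1 else fourierMat d

lemma flowerUnitary_mem_unitaryGroup {d : ℕ} (hd : 0 < d) (j : Fin 2) :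
    flowerUnitary d j ∈ unitaryGroup (Fin d) ℂ := by
  unfold flowerUnitary
  split_ifs
  · exact one_mem _
  · exact fourierMat_mem_unitaryGroup hd

/-- `flowerVec d (i, j) = U_j |i⟩`. -/
def flowerVec (d : ℕ) (k : Fin d × Fin 2) : Fin d → ℂ :=
  fun c => flowerUnitary d k.2 c k.1

lemma sum_flowerVec {M : Type*} [AddCommMonoid M] (d : ℕ) (f : (Fin d → ℂ) → M) :
    ∑ k, f (flowerVec d k) =
      ∑ i, f (fun a => (1 : Matrix (Fin d) (Fin d) ℂ) a i) +
        ∑ i, f (fun a => fourierMat d a i) := by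
  simp only [Fintype.sum_prod_type, Fin.sum_univ_two, Finset.sum_add_distrib]
  rfl

lemma sum_ketbra_flowerVec {d : ℕ} (hd : 0 < d) :
    ∑ k, ketbra (flowerVec d k) = (2 : ℂ) • 1 := by
  rw [Fintype.sum_prod_type, Finset.sum_comm, Fin.sum_univ_two]
  have h : ∀ j, ∑ i, ketbra (flowerVec d (i, j)) = 1 := fun j =>
    sum_ketbra_col_eq_one (flowerUnitary_mem_unitaryGroup hd j)
  rw [h, h, two_smul]

lemma flowerKet_apply (d : ℕ) (p q : Fin d × Fin 2) (c : Fin d) :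
    flowerKet d ((p, q), c) =
      if p = q then ((Real.sqrt (2 * d) : ℝ) : ℂ)⁻¹ * flowerVec d p c else 0 := by
  simp only [flowerKet, Prod.ext_iff, flowerVec, flowerUnitary]
  split_ifs <;> simp

lemma flowerKet_swap (d : ℕ) (p q : Fin d × Fin 2) (c : Fin d) :
    flowerKet d ((p, q), c) = flowerKet d ((q, p), c) := by
  rw [flowerKet_apply, flowerKet_apply]
  by_cases h : p = q
  · subst h; rfl
  · rw [if_neg h, if_neg (Ne.symm h)]

lemma margAE_flowerPure (d : ℕ) :
    margAE (flowerPure d) = reindex (Equiv.prodComm _ _) (Equiv.prodComm _ _)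
      (blockDiagonal fun k => (((2 * d)⁻¹ : ℝ) : ℂ) • ketbra (flowerVec d k)) := by
  ext ⟨p, c⟩ ⟨q, c'⟩
  simp only [margAE, flowerPure, ketbra, of_apply, flowerKet_apply, reindex_apply,
    submatrix_apply, Equiv.prodComm_symm, Equiv.prodComm_apply, Prod.swap_prod_mk,
    blockDiagonal_apply, ite_mul, zero_mul, Finset.sum_ite_eq, Finset.mem_univ, if_true]
  by_cases h : q = p
  · subst h
    simp only [if_true, Matrix.smul_apply, of_apply, smul_eq_mul, star_mul', star_inv₀,
      Complex.star_def, Complex.conj_ofReal, Complex.ofReal_inv]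
    linear_combination (flowerVec d q c * (starRingEnd ℂ) (flowerVec d q c')) *
      ofReal_sqrt_inv_mul_self (by positivity : (0 : ℝ) ≤ 2 * d)
  · simp [h, Ne.symm h]

lemma margBE_flowerPure (d : ℕ) : margBE (flowerPure d) = margAE (flowerPure d) := by
  ext x y
  simp only [margBE, margAE, flowerPure, ketbra, of_apply]
  exact Finset.sum_congr rfl fun a _ => by rw [flowerKet_swap d a x.1, flowerKet_swap d a y.1]

lemma ptraceL_flowerPure {d : ℕ} (hd : 0 < d) : ptraceL (flowerPure d) = mmix (Fin d) := by
  rw [← ptraceL_margAE, margAE_flowerPure, ptraceL_reindex_blockDiagonal, ← Finset.smul_sum,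
    sum_ketbra_flowerVec hd, smul_smul, mmix, Fintype.card_fin]
  congr 1
  push_cast
  field_simp

def flowerIsometry (d : ℕ) : Matrix ((Fin d × Fin 2) × (Fin d × Fin 2)) (Fin d) ℂ :=
  of fun p c => if p.1 = p.2 then ((Real.sqrt 2 : ℝ) : ℂ)⁻¹ * flowerVec d p.1 c else 0

lemma flowerIsometry_conjTranspose_mul {d : ℕ} (hd : 0 < d) :
    (flowerIsometry d)ᴴ * flowerIsometry d = 1 := by
  ext c c'
  have h := congrFun₂ (sum_ketbra_flowerVec hd) c' c
  simp only [Matrix.sum_apply, ketbra, of_apply, Matrix.smul_apply, Complex.star_def] at h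
  have hs := ofReal_sqrt_inv_mul_self (zero_le_two (α := ℝ))
  rw [mul_apply, Fintype.sum_prod_type]
  simp only [conjTranspose_apply, flowerIsometry, of_apply, apply_ite star, star_zero, ite_mul,
    zero_mul, Finset.sum_ite_eq, Finset.mem_univ, if_true, star_mul', star_inv₀,
    Complex.star_def, Complex.conj_ofReal]
  calc
    _ = ((Real.sqrt 2 : ℝ) : ℂ)⁻¹ * ((Real.sqrt 2 : ℝ) : ℂ)⁻¹ *
        ∑ k, flowerVec d k c' * (starRingEnd ℂ) (flowerVec d k c) := by
      rw [Finset.mul_sum]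
      exact Finset.sum_congr rfl fun _ _ => by ring
    _ = _ := by
      rw [hs, h, one_apply, one_apply]
      by_cases hcc : c = c'
      · simp [hcc]
      · simp [hcc, Ne.symm hcc]

lemma flowerKet_eq_mulVec (d : ℕ) :
    flowerKet d = (flowerIsometry d ⊗ₖ (1 : Matrix (Fin d) (Fin d) ℂ)) *ᵥ maxEntKet (Fin d) := by
  ext ⟨⟨p, q⟩, c⟩
  simp [mulVec, dotProduct, Fintype.sum_prod_type, flowerKet_apply, flowerIsometry, maxEntKet,
    one_apply]
  split_ifs <;> ring

lemma flowerPure_eq_conj (d : ℕ) :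
    flowerPure d = (flowerIsometry d ⊗ₖ (1 : Matrix (Fin d) (Fin d) ℂ)) * maxEnt (Fin d) *
      (flowerIsometry d ⊗ₖ (1 : Matrix (Fin d) (Fin d) ℂ))ᴴ := by
  rw [flowerPure, flowerKet_eq_mulVec, ketbra_mulVec, maxEnt_eq_ketbra]

lemma vnEntropy_margAE_idTensor_flowerPure [Fintype E] [DecidableEq E] {d : ℕ} (hd : 0 < d)
    (Λ : CPTPMap (Fin d) E) :
    vnEntropy (margAE (idTensor Λ (flowerPure d))) =
      1 + Real.logb 2 d + (2 * d : ℝ)⁻¹ * ∑ k, vnEntropy (Λ.toFun (ketbra (flowerVec d k))) := by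
  have hH : ∀ k, (Λ.toFun (ketbra (flowerVec d k))).IsHermitian := fun k =>
    (Λ.posSemidef_toFun (posSemidef_vecMulVec_self_star _)).1
  have hHs : ∀ k, ((((2 * d)⁻¹ : ℝ) : ℂ) • Λ.toFun (ketbra (flowerVec d k))).IsHermitian :=
    fun k => (hH k).smul (Complex.conj_ofReal _)
  have htr : ∀ k, (Λ.toFun (ketbra (flowerVec d k))).trace = 1 := fun k => by
    rw [Λ.tp]
    exact trace_ketbra_col (flowerUnitary_mem_unitaryGroup hd k.2) k.1
  rw [Λ.margAE_idTensor, margAE_flowerPure, Λ.idTensor_reindex_blockDiagonal]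
  simp only [Λ.toFun_smul]
  rw [vnEntropy_reindex (isHermitian_blockDiagonal_iff.mpr hHs), vnEntropy_blockDiagonal hHs]
  simp only [vnEntropy_real_smul (hH _), htr, Complex.one_re, mul_one, Finset.sum_add_distrib,
    Finset.sum_const, Finset.card_univ, Fintype.card_prod, Fintype.card_fin, ← Finset.mul_sum,
    nsmul_eq_mul]
  have hlog : ((d * 2 : ℕ) : ℝ) * nlog (2 * d : ℝ)⁻¹ = 1 + Real.logb 2 d := by
    rw [show ((d * 2 : ℕ) : ℝ) = 2 * d by push_cast; ring, mul_nlog_inv,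
      Real.logb_mul two_ne_zero (Nat.cast_ne_zero.mpr hd.ne'), Real.logb_self_eq_one one_lt_two]
  rw [hlog]
  ring

/-- entropies of the extension of the flower state obtained by
applying a channel `Λ` to the purifying system `C`. -/
theorem statement18 {E : Type*} [Fintype E] [DecidableEq E] (d : ℕ) (hd : 0 < d)
    (Λ : CPTPMap (Fin d) E) :
    vnEntropy (margAE (idTensor Λ (flowerPure d))) =
      1 + vnEntropy (mmix (Fin d)) + vnEntropy (Λ.toFun (mmix (Fin d))) -
        (1 / 2) * holevoUnif (fun i : Fin d => Λ.toFun (ketbra (basisVec i))) -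
        (1 / 2) * holevoUnif (fun i : Fin d =>
          Λ.toFun (ketbra (fun a => fourierMat d a i))) ∧
    vnEntropy (margBE (idTensor Λ (flowerPure d))) =
      vnEntropy (margAE (idTensor Λ (flowerPure d))) ∧
    vnEntropy (ptraceL (idTensor Λ (flowerPure d))) =
      vnEntropy (Λ.toFun (mmix (Fin d))) ∧
    vnEntropy (idTensor Λ (flowerPure d)) =
      vnEntropy (idTensor Λ (maxEnt (Fin d))) := by
  refine ⟨?_, ?_, ?_, ?_⟩
  · simp only [basisVec_eq_col_one]
    rw [vnEntropy_margAE_idTensor_flowerPure hd,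
      sum_flowerVec d fun v => vnEntropy (Λ.toFun (ketbra v)), vnEntropy_mmix,
      Λ.holevoUnif_toFun_ketbra_col (one_mem _),
      Λ.holevoUnif_toFun_ketbra_col (fourierMat_mem_unitaryGroup hd), Fintype.card_fin]
    field_simp
    ring
  · rw [Λ.margBE_idTensor, Λ.margAE_idTensor, margBE_flowerPure]
  · rw [Λ.ptraceL_idTensor, ptraceL_flowerPure hd]
  · rw [flowerPure_eq_conj, Λ.idTensor_kronecker_conj,
      vnEntropy_conj_isometry
        (kronecker_one_conjTranspose_mul (flowerIsometry_conjTranspose_mul hd))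
        (Λ.posSemidef_idTensor (maxEnt_eq_ketbra (Fin d) ▸ posSemidef_vecMulVec_self_star _)).1]

end
end
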